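/- arXiv:1504.01696 — 4 statements merged into one kernel-verified Lean document; each statement's English description precedes it below -/
import Mathlib

section
/- For any k̄, l̄ ∈ ℤ≥0^[n], if F ∈ S_{k̄} and G ∈ S_{l̄}, then F ⋆ G ∈ S_{k̄+l̄}; that is, the subspace S ⊂ 𝕊 defined by the pole and wheel conditions is closed under the star product ⋆. -/
open Filter Topology

noncomputable section

/-- An assignment of complex values to the variables `x i j` (`i`-th group, `j`-th variable,
both 0-indexed). -/
abbrev Va : Type := ℕ → ℕ → ℂ

/-- cyclic successor mod `n` -/
def cyc (n i : ℕ) : ℕ := (i + 1) % n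

/-- cyclic predecessor mod `n` -/
def cycP (n i : ℕ) : ℕ := (i + n - 1) % n

/-- the matrix of rational functions `ω_{i,i'}(z)` -/
def omg (n : ℕ) (q d : ℂ) (i i' : ℕ) (z : ℂ) : ℂ :=
  if i' = i then (z - (q ^ 2)⁻¹) / (z - 1)
  else if i' = cyc n i then (d⁻¹ * z - q) / (z - 1)
  else if i = cyc n i' then (z - q * d⁻¹) / (z - 1)
  else 1

/-- the assignment `v` with the first `m i` variables of each group `i < n` permuted by `σ i` -/
def permAssign (n : ℕ) (m : ℕ → ℕ) (σ : ∀ i : Fin n, Equiv.Perm (Fin (m i.1))) (v : Va) : Va :=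
  fun i j =>
    if h : i < n then
      if h2 : j < m i then v i ((σ ⟨i, h⟩) ⟨j, h2⟩).1 else v i j
    else v i j

/-- the star (shuffle) product of `F` of degree `k` with `G` of degree `l` -/
def starD (n : ℕ) (q d : ℂ) (k l : ℕ → ℕ) (F G : Va → ℂ) : Va → ℂ :=
  fun v =>
    ∑ σ : ∀ i : Fin n, Equiv.Perm (Fin (k i.1 + l i.1)),
      (fun w : Va =>
          F w * G (fun i j => w i (j + k i)) *
            ∏ i : Fin n, ∏ i' : Fin n, ∏ j : Fin (k i.1), ∏ j' : Fin (l i'.1),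
              omg n q d i.1 i'.1 (w i.1 j.1 / w i'.1 (k i'.1 + j'.1)))
        (permAssign n (fun i => k i + l i) σ v)

/-- generic assignments for the degree vector `k`: all relevant coordinates are nonzero and
pairwise distinct (so that all our rational expressions are pole-free) -/
def Dom (n : ℕ) (k : ℕ → ℕ) : Set Va :=
  {v | (∀ i, i < n → ∀ j, j < k i → v i j ≠ 0) ∧
    ∀ i i' j j', i < n → i' < n → j < k i → j' < k i' → (i, j) ≠ (i', j') → v i j ≠ v i' j'}

/-- generic assignments with no bound on the number of variables in each group -/
def DomAll (n : ℕ) : Set Va :=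
  {v | (∀ i, i < n → ∀ j, v i j ≠ 0) ∧
    ∀ i i' j j', i < n → i' < n → (i, j) ≠ (i', j') → v i j ≠ v i' j'}

/-- `F` only depends on the variables `x i j` with `i < n`, `j < k i` -/
def DependsOnVars (n : ℕ) (k : ℕ → ℕ) (F : Va → ℂ) : Prop :=
  ∀ v w : Va, (∀ i, i < n → ∀ j, j < k i → v i j = w i j) → F v = F w

/-- `F` is symmetric in the variables of each group -/
def SymmIn (n : ℕ) (k : ℕ → ℕ) (F : Va → ℂ) : Prop :=
  ∀ v : Va, ∀ i₀, i₀ < n → ∀ σ : Equiv.Perm ℕ, (∀ j, k i₀ ≤ j → σ j = j) →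
    F (fun i j => if i = i₀ then v i (σ j) else v i j) = F v

/-- the denominator `∏_{i ∈ [n]} ∏_{j ≤ k_i, j' ≤ k_{i+1}} (x_{i,j} - x_{i+1,j'})` -/
def poleDenom (n : ℕ) (k : ℕ → ℕ) (v : Va) : ℂ :=
  ∏ i : Fin n, ∏ j : Fin (k i.1), ∏ j' : Fin (k (cyc n i.1)), (v i.1 j.1 - v (cyc n i.1) j'.1)

/-- the pole conditions: `F = f / poleDenom` with `f` a (Laurent) polynomial,
written as `f₀ / (∏ x_{i,j})^N` with `f₀` an honest polynomial -/
def PoleCond (n : ℕ) (k : ℕ → ℕ) (F : Va → ℂ) : Prop :=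
  ∃ (f : MvPolynomial (ℕ × ℕ) ℂ) (N : ℕ),
    ∀ v ∈ Dom n k,
      F v * poleDenom n k v * (∏ i : Fin n, ∏ j : Fin (k i.1), v i.1 j.1) ^ N =
        MvPolynomial.eval (fun p : ℕ × ℕ => v p.1 p.2) f

/-- the wheel conditions: `F` vanishes whenever `x_{i,j₁}/x_{i+ε,l} = q d^ε` and
`x_{i+ε,l}/x_{i,j₂} = q d^{-ε}` for some `ε ∈ {±1}` -/
def WheelCond (n : ℕ) (q d : ℂ) (k : ℕ → ℕ) (F : Va → ℂ) : Prop :=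
  ∀ v ∈ Dom n k, ∀ i, i < n →
    ((∀ j₁ j₂ l, j₁ < k i → j₂ < k i → l < k (cyc n i) →
        v i j₁ = q * d * v (cyc n i) l → v (cyc n i) l = q * d⁻¹ * v i j₂ → F v = 0) ∧
     (∀ j₁ j₂ l, j₁ < k i → j₂ < k i → l < k (cycP n i) →
        v i j₁ = q * d⁻¹ * v (cycP n i) l → v (cycP n i) l = q * d * v i j₂ → F v = 0))

/-- `F` has total degree `0` -/
def Deg0 (n : ℕ) (k : ℕ → ℕ) (F : Va → ℂ) : Prop :=
  ∀ v ∈ Dom n k, ∀ ξ : ℂ, ξ ≠ 0 → F (fun i j => ξ * v i j) = F v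

/-- membership in `S_{k̄}`: the big shuffle algebra -/
def SK (n : ℕ) (q d : ℂ) (k : ℕ → ℕ) (F : Va → ℂ) : Prop :=
  DependsOnVars n k F ∧ SymmIn n k F ∧ PoleCond n k F ∧ WheelCond n q d k F

/-- membership in `S_{k̄,0}` -/
def SK0 (n : ℕ) (q d : ℂ) (k : ℕ → ℕ) (F : Va → ℂ) : Prop :=
  SK n q d k F ∧ Deg0 n k F

/-- multiply by `ξ` the first `l i` variables of each group `i < n` -/
def scaleVar (n : ℕ) (l : ℕ → ℕ) (ξ : ℂ) (v : Va) : Va :=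
  fun i j => if i < n ∧ j < l i then ξ * v i j else v i j

/-- `∂^{(∞;l̄)} F` exists at `v` and equals `Lim` -/
def limInfty (n : ℕ) (l : ℕ → ℕ) (F : Va → ℂ) (v : Va) (Lim : ℂ) : Prop :=
  Tendsto (fun ξ : ℂ => F (scaleVar n l ξ v)) (Bornology.cobounded ℂ) (𝓝 Lim)

/-- `∂^{(0;l̄)} F` exists at `v` and equals `Lim` -/
def limZero (n : ℕ) (l : ℕ → ℕ) (F : Va → ℂ) (v : Va) (Lim : ℂ) : Prop :=
  Tendsto (fun ξ : ℂ => F (scaleVar n l ξ v)) (𝓝[≠] (0 : ℂ)) (𝓝 Lim)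

/-- the degree vector `[a;b]`: `[a;b]_i = #{c ∈ [a,b] : c ≡ i mod n}` -/
def intvCount (n : ℕ) (a b : ℤ) (i : ℕ) : ℕ :=
  ((Finset.Icc a b).filter fun c => c % (n : ℤ) = (i : ℤ)).card

/-- `s` extended `n`-periodically to integer indices -/
def sext (n : ℕ) (s : ℕ → ℂ) (c : ℤ) : ℂ := s (c % (n : ℤ)).toNat

/-- membership in `A(s̄)_{k̄}` -/
def memA (n : ℕ) (q d : ℂ) (s : ℕ → ℂ) (k : ℕ → ℕ) (F : Va → ℂ) : Prop :=
  SK0 n q d k F ∧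
    ∀ a b : ℤ, a ≤ b → (∀ i, i < n → intvCount n a b i ≤ k i) →
      ∀ v ∈ Dom n k, ∃ Li L0 : ℂ,
        limInfty n (intvCount n a b) F v Li ∧ limZero n (intvCount n a b) F v L0 ∧
          Li = (∏ c ∈ Finset.Icc a b, sext n s c) * L0

/-- genericity of the tuple `(s_0, …, s_{n-1})` -/
def Generic (n : ℕ) (q d : ℂ) (s : ℕ → ℂ) : Prop :=
  ∀ α : ℕ → ℤ, (∃ a b : ℤ, (∏ i ∈ Finset.range n, s i ^ α i) = q ^ a * d ^ b) →
    ∀ i j, i < n → j < n → α i = α j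

/-- none of `q`, `qd`, `qd⁻¹` is a root of unity -/
def NoRootsOfUnity (q d : ℂ) : Prop :=
  ∀ m : ℕ, 0 < m → q ^ m ≠ 1 ∧ (q * d) ^ m ≠ 1 ∧ (q * d⁻¹) ^ m ≠ 1

/-- the element `F_k^μ(s̄) ∈ S_{kδ,0}` -/
def Fkmu (n : ℕ) (q : ℂ) (s : ℕ → ℂ) (k : ℕ) (μ : ℂ) : Va → ℂ :=
  fun v =>
    ((∏ i : Fin n, ∏ j : Fin k, ∏ j' : Fin k,
        if j = j' then 1 else v i.1 j.1 - (q ^ 2)⁻¹ * v i.1 j'.1) *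
      ∏ i : Fin n, ((∏ i' ∈ Finset.range (i.1 + 1), s i') * ∏ j : Fin k, v i.1 j.1 -
        μ * ∏ j : Fin k, v (cyc n i.1) j.1)) /
      ∏ i : Fin n, ∏ j : Fin k, ∏ j' : Fin k, (v i.1 j.1 - v (cyc n i.1) j'.1)

/-- iterated star product `F_{k_1}^{μ_1}(s̄) ⋆ ⋯ ⋆ F_{k_r}^{μ_r}(s̄)`, together with its
total degree `k_1 + ⋯ + k_r` -/
def FkmuList (n : ℕ) (q d : ℂ) (s : ℕ → ℂ) : List (ℕ × ℂ) → ℕ × (Va → ℂ)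
  | [] => (0, fun _ => 1)
  | km :: rest =>
      let p := FkmuList n q d s rest
      (km.1 + p.1, starD n q d (fun _ => km.1) (fun _ => p.1) (Fkmu n q s km.1 km.2) p.2)

/-- the element `F_k ∈ S_{kδ,0}` -/
def Fk (n : ℕ) (q : ℂ) (k : ℕ) : Va → ℂ :=
  fun v =>
    ((∏ i : Fin n, ∏ j : Fin k, ∏ j' : Fin k,
        if j = j' then 1 else q⁻¹ * v i.1 j.1 - q * v i.1 j'.1) *
      ∏ i : Fin n, ∏ j : Fin k, v i.1 j.1) /
      ∏ i : Fin n, ∏ j : Fin k, ∏ j' : Fin k, (v (cyc n i.1) j'.1 - v i.1 j.1)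

/-- iterated star product `L_{m_1} ⋆ ⋯ ⋆ L_{m_r}` of elements `L m` of degree `mδ`,
together with its total degree -/
def starList (n : ℕ) (q d : ℂ) (L : ℕ → Va → ℂ) : List ℕ → ℕ × (Va → ℂ)
  | [] => (0, fun _ => 1)
  | m :: rest =>
      let p := starList n q d L rest
      (m + p.1, starD n q d (fun _ => m) (fun _ => p.1) (L m) p.2)




namespace Stmt0

lemma cyc_lt {n : ℕ} (hn : 0 < n) (i : ℕ) : cyc n i < n := Nat.mod_lt _ hn

lemma cycP_lt {n : ℕ} (hn : 0 < n) (i : ℕ) : cycP n i < n := Nat.mod_lt _ hn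

lemma cyc_eq {n i : ℕ} (hi : i < n) : cyc n i = if i + 1 = n then 0 else i + 1 := by
  unfold cyc
  split
  · simp [*]
  · exact Nat.mod_eq_of_lt (by omega)

lemma cycP_eq {n i : ℕ} (hn : 0 < n) (hi : i < n) :
    cycP n i = if i = 0 then n - 1 else i - 1 := by
  unfold cycP
  split
  · subst_vars; simp only [Nat.zero_add]; exact Nat.mod_eq_of_lt (by omega)
  · have h1 : i + n - 1 = (i - 1) + n := by omega
    rw [h1, Nat.add_mod_right]
    exact Nat.mod_eq_of_lt (by omega)

lemma cycP_cyc {n i : ℕ} (hn : 0 < n) (hi : i < n) : cycP n (cyc n i) = i := by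
  rw [cyc_eq hi, cycP_eq hn]
  · split <;> rename_i h
    · split <;> omega
    · split <;> omega
  · split <;> omega

lemma cyc_cycP {n i : ℕ} (hn : 0 < n) (hi : i < n) : cyc n (cycP n i) = i := by
  rw [cycP_eq hn hi, cyc_eq]
  · split <;> rename_i h
    · split <;> omega
    · split <;> omega
  · split <;> omega

lemma cyc_ne_self {n i : ℕ} (hn : 2 ≤ n) (hi : i < n) : cyc n i ≠ i := by
  rw [cyc_eq hi]; split <;> omega

lemma cycP_ne_self {n i : ℕ} (hn : 2 ≤ n) (hi : i < n) : cycP n i ≠ i := by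
  rw [cycP_eq (by omega) hi]; split <;> omega

lemma cyc_ne_cycP {n i : ℕ} (hn : 3 ≤ n) (hi : i < n) : cyc n i ≠ cycP n i := by
  rw [cyc_eq hi, cycP_eq (by omega) hi]
  split <;> split <;> omega

lemma eq_cyc_iff {n i i' : ℕ} (hn : 0 < n) (hi : i < n) (hi' : i' < n) :
    i = cyc n i' ↔ i' = cycP n i := by
  constructor
  · rintro rfl; rw [cycP_cyc hn hi']
  · rintro rfl; rw [cyc_cycP hn hi]

lemma permAssign_apply_lt {n : ℕ} {m : ℕ → ℕ} (σ : ∀ i : Fin n, Equiv.Perm (Fin (m i.1)))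
    (v : Va) {i j : ℕ} (hi : i < n) (hj : j < m i) :
    permAssign n m σ v i j = v i ((σ ⟨i, hi⟩) ⟨j, hj⟩).1 := by
  simp [permAssign, hi, hj]

lemma permAssign_apply_ge {n : ℕ} {m : ℕ → ℕ} (σ : ∀ i : Fin n, Equiv.Perm (Fin (m i.1)))
    (v : Va) {i j : ℕ} (h : ¬ (i < n) ∨ ¬ (j < m i)) :
    permAssign n m σ v i j = v i j := by
  unfold permAssign
  rcases h with h | h
  · simp [h]
  · split
    · simp [h]
    · rfl

lemma Dom.mono {n : ℕ} {k k' : ℕ → ℕ} (h : ∀ i, k' i ≤ k i) {v : Va} (hv : v ∈ Dom n k) :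
    v ∈ Dom n k' := by
  obtain ⟨h1, h2⟩ := hv
  exact ⟨fun i hi j hj => h1 i hi j (lt_of_lt_of_le hj (h i)),
    fun i i' j j' hi hi' hj hj' hne => h2 i i' j j' hi hi' (lt_of_lt_of_le hj (h i))
      (lt_of_lt_of_le hj' (h i')) hne⟩

lemma permAssign_mem_Dom {n : ℕ} {m : ℕ → ℕ} (σ : ∀ i : Fin n, Equiv.Perm (Fin (m i.1)))
    {v : Va} (hv : v ∈ Dom n m) : permAssign n m σ v ∈ Dom n m := by
  obtain ⟨h1, h2⟩ := hv
  constructor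
  · intro i hi j hj
    rw [permAssign_apply_lt σ v hi hj]
    exact h1 i hi _ (((σ ⟨i, hi⟩) ⟨j, hj⟩).2)
  · intro i i' j j' hi hi' hj hj' hne
    rw [permAssign_apply_lt σ v hi hj, permAssign_apply_lt σ v hi' hj']
    apply h2 i i' _ _ hi hi' (((σ ⟨i, hi⟩) ⟨j, hj⟩).2) (((σ ⟨i', hi'⟩) ⟨j', hj'⟩).2)
    intro hcon
    apply hne
    rw [Prod.mk.injEq] at hcon ⊢
    obtain ⟨rfl, hc2⟩ := hcon
    refine ⟨rfl, ?_⟩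
    have : (⟨j, hj⟩ : Fin (m i)) = ⟨j', hj'⟩ := by
      apply (σ ⟨i, hi⟩).injective
      exact Fin.val_injective hc2
    simpa using this

lemma shift_mem_Dom {n : ℕ} {k l : ℕ → ℕ} {v : Va} (hv : v ∈ Dom n (fun i => k i + l i)) :
    (fun i j => v i (j + k i)) ∈ Dom n l := by
  obtain ⟨h1, h2⟩ := hv
  constructor
  · intro i hi j hj
    exact h1 i hi _ (by show j + k i < k i + l i; omega)
  · intro i i' j j' hi hi' hj hj' hne
    apply h2 i i' _ _ hi hi' (by show j + k i < k i + l i; omega)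
      (by show j' + k i' < k i' + l i'; omega)
    simp only [ne_eq, Prod.mk.injEq, not_and] at hne ⊢
    intro rfl'
    subst rfl'
    intro h
    exact hne rfl (by omega)

end Stmt0
namespace Stmt0

lemma dependsOn_starD (n : ℕ) (q d : ℂ) (k l : ℕ → ℕ) {F G : Va → ℂ}
    (hF : DependsOnVars n k F) (hG : DependsOnVars n l G) :
    DependsOnVars n (fun i => k i + l i) (starD n q d k l F G) := by
  intro v w hvw
  unfold starD
  apply Finset.sum_congr rfl
  intro σ _
  have key : ∀ i, i < n → ∀ j, j < k i + l i →
      permAssign n (fun i => k i + l i) σ v i j = permAssign n (fun i => k i + l i) σ w i j := by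
    intro i hi j hj
    rw [permAssign_apply_lt (m := fun i => k i + l i) σ v hi hj,
      permAssign_apply_lt (m := fun i => k i + l i) σ w hi hj]
    exact hvw i hi _ (Fin.is_lt _)
  refine congrArg₂ _ (congrArg₂ _ ?_ ?_) ?_
  · exact hF _ _ (fun i hi j hj => key i hi j (by omega))
  · exact hG _ _ (fun i hi j hj => key i hi (j + k i) (by omega))
  · apply Finset.prod_congr rfl; intro i _
    apply Finset.prod_congr rfl; intro i' _
    apply Finset.prod_congr rfl; intro j _
    apply Finset.prod_congr rfl; intro j' _
    rw [key i.1 i.2 j.1 (by omega), key i'.1 i'.2 (k i'.1 + j'.1) (by omega)]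

end Stmt0
namespace Stmt0

lemma cyc_cyc_ne {n i : ℕ} (hn : 3 ≤ n) (hi : i < n) : cyc n (cyc n i) ≠ i := by
  intro h
  have h1 : cyc n i < n := cyc_lt (by omega) i
  have e1 : cyc n i = if i + 1 = n then 0 else i + 1 := cyc_eq hi
  have e2 : cyc n (cyc n i) = if (cyc n i) + 1 = n then 0 else (cyc n i) + 1 := cyc_eq h1
  rw [h] at e2
  split at e1 <;> split at e2 <;> omega

lemma prod4_eq_zero {n : ℕ} {k l : ℕ → ℕ}
    (f : (i : Fin n) → (i' : Fin n) → Fin (k i.1) → Fin (l i'.1) → ℂ)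
    (i i' : Fin n) (j : Fin (k i.1)) (j' : Fin (l i'.1)) (h : f i i' j j' = 0) :
    (∏ a : Fin n, ∏ b : Fin n, ∏ c : Fin (k a.1), ∏ e : Fin (l b.1), f a b c e) = 0 := by
  apply Finset.prod_eq_zero (Finset.mem_univ i)
  apply Finset.prod_eq_zero (Finset.mem_univ i')
  apply Finset.prod_eq_zero (Finset.mem_univ j)
  exact Finset.prod_eq_zero (Finset.mem_univ j') h

lemma omg_eq_zero_cyc {n : ℕ} {q d : ℂ} (hd : d ≠ 0) {i i' : ℕ} (h1 : i' ≠ i) (h2 : i' = cyc n i) :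
    omg n q d i i' (q * d) = 0 := by
  unfold omg; rw [if_neg h1, if_pos h2]
  have : d⁻¹ * (q * d) - q = 0 := by field_simp; ring
  rw [this, zero_div]

lemma omg_eq_zero_cycP {n : ℕ} {q d : ℂ} {i i' : ℕ} (h1 : i' ≠ i) (h2 : ¬ i' = cyc n i)
    (h3 : i = cyc n i') : omg n q d i i' (q * d⁻¹) = 0 := by
  unfold omg; rw [if_neg h1, if_neg h2, if_pos h3, sub_self, zero_div]

lemma omg_eq_zero_diag {n : ℕ} {q d : ℂ} (i : ℕ) : omg n q d i i ((q ^ 2)⁻¹) = 0 := by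
  unfold omg; rw [if_pos rfl, sub_self, zero_div]

lemma star_term_eq_zero (n : ℕ) (q d : ℂ) (hq : q ≠ 0)
    (k l : ℕ → ℕ) {F G : Va → ℂ}
    (v : Va) (hv : v ∈ Dom n (fun x => k x + l x))
    (i i' : ℕ) (hi : i < n) (hi' : i' < n) (c₁ c₂ : ℂ) (hc : c₁ * c₂ = q ^ 2)
    (j₁ j₂ ll : ℕ) (hj₁ : j₁ < k i + l i) (hj₂ : j₂ < k i + l i) (hll : ll < k i' + l i')
    (e₁ : v i j₁ = c₁ * v i' ll) (e₂ : v i' ll = c₂ * v i j₂)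
    (homg1 : omg n q d i i' c₁ = 0)
    (homg2 : omg n q d i' i c₂ = 0)
    (hFwheel : ∀ w ∈ Dom n k, ∀ a₁ a₂ b : ℕ, a₁ < k i → a₂ < k i → b < k i' →
        w i a₁ = c₁ * w i' b → w i' b = c₂ * w i a₂ → F w = 0)
    (hGwheel : ∀ w ∈ Dom n l, ∀ a₁ a₂ b : ℕ, a₁ < l i → a₂ < l i → b < l i' →
        w i a₁ = c₁ * w i' b → w i' b = c₂ * w i a₂ → G w = 0)
    (σ : ∀ x : Fin n, Equiv.Perm (Fin (k x.1 + l x.1))) :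
    F (permAssign n (fun x => k x + l x) σ v) *
      G (fun a b => permAssign n (fun x => k x + l x) σ v a (b + k a)) *
      (∏ a : Fin n, ∏ b : Fin n, ∏ c : Fin (k a.1), ∏ e : Fin (l b.1),
        omg n q d a.1 b.1 (permAssign n (fun x => k x + l x) σ v a.1 c.1 /
          permAssign n (fun x => k x + l x) σ v b.1 (k b.1 + e.1))) = 0 := by
  set w : Va := permAssign n (fun x => k x + l x) σ v with hw_def
  have hwDom : w ∈ Dom n (fun x => k x + l x) := permAssign_mem_Dom σ hv
  have hvne : v i j₂ ≠ 0 := hv.1 i hi j₂ hj₂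
  have hvne' : v i' ll ≠ 0 := hv.1 i' hi' ll hll
  set a₁ : Fin (k i + l i) := (σ ⟨i, hi⟩)⁻¹ ⟨j₁, hj₁⟩ with ha₁def
  set a₂ : Fin (k i + l i) := (σ ⟨i, hi⟩)⁻¹ ⟨j₂, hj₂⟩ with ha₂def
  set b : Fin (k i' + l i') := (σ ⟨i', hi'⟩)⁻¹ ⟨ll, hll⟩ with hbdef
  have hwa₁ : w i a₁.1 = v i j₁ := by
    rw [hw_def, permAssign_apply_lt (m := fun x => k x + l x) σ v hi a₁.2]
    simp [ha₁def]
  have hwa₂ : w i a₂.1 = v i j₂ := by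
    rw [hw_def, permAssign_apply_lt (m := fun x => k x + l x) σ v hi a₂.2]
    simp [ha₂def]
  have hwb : w i' b.1 = v i' ll := by
    rw [hw_def, permAssign_apply_lt (m := fun x => k x + l x) σ v hi' b.2]
    simp [hbdef]
  by_cases c1 : a₁.1 < k i
  · by_cases c3 : b.1 < k i'
    · by_cases c2 : a₂.1 < k i
      · -- all in F block
        apply mul_eq_zero_of_left
        apply mul_eq_zero_of_left
        apply hFwheel w (Dom.mono (fun x => Nat.le_add_right _ _) hwDom) a₁.1 a₂.1 b.1 c1 c2 c3
        · rw [hwa₁, hwb]; exact e₁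
        · rw [hwb, hwa₂]; exact e₂
      · -- b in F, a₂ in G : factor omg i' i c₂
        apply mul_eq_zero_of_right
        apply prod4_eq_zero _ ⟨i', hi'⟩ ⟨i, hi⟩ ⟨b.1, c3⟩ ⟨a₂.1 - k i, by show a₂.1 - k i < l i; omega⟩
        show omg n q d i' i (w i' b.1 / w i (k i + (a₂.1 - k i))) = 0
        have harg : w i' b.1 / w i (k i + (a₂.1 - k i)) = c₂ := by
          rw [(by omega : k i + (a₂.1 - k i) = a₂.1), hwb, hwa₂, e₂, mul_div_assoc,
            div_self hvne, mul_one]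
        rw [harg]; exact homg2
    · -- a₁ in F, b in G : factor omg i i' c₁
      apply mul_eq_zero_of_right
      apply prod4_eq_zero _ ⟨i, hi⟩ ⟨i', hi'⟩ ⟨a₁.1, c1⟩ ⟨b.1 - k i', by show b.1 - k i' < l i'; omega⟩
      show omg n q d i i' (w i a₁.1 / w i' (k i' + (b.1 - k i'))) = 0
      have harg : w i a₁.1 / w i' (k i' + (b.1 - k i')) = c₁ := by
        rw [(by omega : k i' + (b.1 - k i') = b.1), hwa₁, hwb, e₁, mul_div_assoc,
          div_self hvne', mul_one]
      rw [harg]; exact homg1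
  · by_cases c2 : a₂.1 < k i
    · -- a₂ in F, a₁ in G : diagonal factor
      apply mul_eq_zero_of_right
      apply prod4_eq_zero _ ⟨i, hi⟩ ⟨i, hi⟩ ⟨a₂.1, c2⟩ ⟨a₁.1 - k i, by show a₁.1 - k i < l i; omega⟩
      show omg n q d i i (w i a₂.1 / w i (k i + (a₁.1 - k i))) = 0
      have hv12 : v i j₁ = q ^ 2 * v i j₂ := by rw [e₁, e₂, ← mul_assoc, hc]
      have harg : w i a₂.1 / w i (k i + (a₁.1 - k i)) = (q ^ 2)⁻¹ := by
        rw [(by omega : k i + (a₁.1 - k i) = a₁.1), hwa₂, hwa₁, hv12, mul_comm, ← div_div,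
          div_self hvne, one_div]
      rw [harg]; exact omg_eq_zero_diag i
    · by_cases c3 : b.1 < k i'
      · -- b in F, a₂ in G
        apply mul_eq_zero_of_right
        apply prod4_eq_zero _ ⟨i', hi'⟩ ⟨i, hi⟩ ⟨b.1, c3⟩ ⟨a₂.1 - k i, by show a₂.1 - k i < l i; omega⟩
        show omg n q d i' i (w i' b.1 / w i (k i + (a₂.1 - k i))) = 0
        have harg : w i' b.1 / w i (k i + (a₂.1 - k i)) = c₂ := by
          rw [(by omega : k i + (a₂.1 - k i) = a₂.1), hwb, hwa₂, e₂, mul_div_assoc,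
            div_self hvne, mul_one]
        rw [harg]; exact homg2
      · -- all in G block
        apply mul_eq_zero_of_left
        apply mul_eq_zero_of_right
        apply hGwheel _ (shift_mem_Dom hwDom) (a₁.1 - k i) (a₂.1 - k i) (b.1 - k i')
          (by omega) (by omega) (by omega)
        · show w i (a₁.1 - k i + k i) = c₁ * w i' (b.1 - k i' + k i')
          rw [(by omega : a₁.1 - k i + k i = a₁.1), (by omega : b.1 - k i' + k i' = b.1),
            hwa₁, hwb]
          exact e₁
        · show w i' (b.1 - k i' + k i') = c₂ * w i (a₂.1 - k i + k i)
          rw [(by omega : a₂.1 - k i + k i = a₂.1), (by omega : b.1 - k i' + k i' = b.1),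
            hwb, hwa₂]
          exact e₂

lemma wheelCond_starD (n : ℕ) (hn : 3 ≤ n) (q d : ℂ) (hq : q ≠ 0) (hd : d ≠ 0)
    (k l : ℕ → ℕ) {F G : Va → ℂ}
    (hF : SK n q d k F) (hG : SK n q d l G) :
    WheelCond n q d (fun i => k i + l i) (starD n q d k l F G) := by
  intro v hv i hi
  have hc1 : (q * d) * (q * d⁻¹) = q ^ 2 := by field_simp
  have hc2 : (q * d⁻¹) * (q * d) = q ^ 2 := by field_simp
  constructor
  · intro j₁ j₂ ll hj₁ hj₂ hll e₁ e₂
    have hi' : cyc n i < n := cyc_lt (by omega) i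
    apply Finset.sum_eq_zero
    intro σ _
    exact star_term_eq_zero n q d hq k l v hv i (cyc n i) hi hi' (q * d) (q * d⁻¹) hc1
      j₁ j₂ ll hj₁ hj₂ hll e₁ e₂
      (omg_eq_zero_cyc hd (cyc_ne_self (by omega) hi) rfl)
      (omg_eq_zero_cycP (Ne.symm (cyc_ne_self (by omega) hi))
        (fun h => cyc_cyc_ne hn hi h.symm) rfl)
      (fun w hw a₁ a₂ b h1 h2 h3 r1 r2 => ((hF.2.2.2 w hw i hi).1 a₁ a₂ b h1 h2 h3 r1 r2))
      (fun w hw a₁ a₂ b h1 h2 h3 r1 r2 => ((hG.2.2.2 w hw i hi).1 a₁ a₂ b h1 h2 h3 r1 r2))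
      σ
  · intro j₁ j₂ ll hj₁ hj₂ hll e₁ e₂
    have hi' : cycP n i < n := cycP_lt (by omega) i
    apply Finset.sum_eq_zero
    intro σ _
    exact star_term_eq_zero n q d hq k l v hv i (cycP n i) hi hi' (q * d⁻¹) (q * d) hc2
      j₁ j₂ ll hj₁ hj₂ hll e₁ e₂
      (omg_eq_zero_cycP (cycP_ne_self (by omega) hi)
        (fun h => cyc_ne_cycP hn hi h.symm) (cyc_cycP (by omega) hi).symm)
      (omg_eq_zero_cyc hd (Ne.symm (cycP_ne_self (by omega) hi)) (cyc_cycP (by omega) hi).symm)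
      (fun w hw a₁ a₂ b h1 h2 h3 r1 r2 => ((hF.2.2.2 w hw i hi).2 a₁ a₂ b h1 h2 h3 r1 r2))
      (fun w hw a₁ a₂ b h1 h2 h3 r1 r2 => ((hG.2.2.2 w hw i hi).2 a₁ a₂ b h1 h2 h3 r1 r2))
      σ

end Stmt0
namespace Stmt0

def permFin (M : ℕ) (σ : Equiv.Perm ℕ) (hfix : ∀ j, M ≤ j → σ j = j) : Equiv.Perm (Fin M) where
  toFun x := ⟨σ x.1, by
    by_contra hc
    have h1 : σ (σ x.1) = σ x.1 := hfix _ (by omega)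
    have := σ.injective h1
    omega⟩
  invFun x := ⟨σ⁻¹ x.1, by
    by_contra hc
    have h1 : σ (σ⁻¹ x.1) = σ⁻¹ x.1 := hfix _ (by omega)
    rw [show σ (σ⁻¹ x.1) = x.1 from σ.apply_symm_apply x.1] at h1
    omega⟩
  left_inv x := by ext; simp
  right_inv x := by ext; simp

@[simp] lemma permFin_apply (M : ℕ) (σ : Equiv.Perm ℕ) (hfix : ∀ j, M ≤ j → σ j = j)
    (x : Fin M) : (permFin M σ hfix x).1 = σ x.1 := rfl

lemma symmIn_starD (n : ℕ) (q d : ℂ) (k l : ℕ → ℕ) (F G : Va → ℂ) :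
    SymmIn n (fun i => k i + l i) (starD n q d k l F G) := by
  classical
  intro v i₀ hi₀ σ₀ hfix
  have hfix' : ∀ j, k i₀ + l i₀ ≤ j → σ₀ j = j := hfix
  set t : ∀ i : Fin n, Equiv.Perm (Fin (k i.1 + l i.1)) := fun i =>
    if h : i.1 = i₀ then permFin (k i.1 + l i.1) σ₀ (fun j hj => hfix' j (by rw [h] at hj; exact hj))
    else 1 with ht
  set E : (∀ i : Fin n, Equiv.Perm (Fin (k i.1 + l i.1))) ≃
      (∀ i : Fin n, Equiv.Perm (Fin (k i.1 + l i.1))) :=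
    Equiv.piCongrRight (fun i => Equiv.mulLeft (t i)) with hE
  have key : ∀ σ : ∀ i : Fin n, Equiv.Perm (Fin (k i.1 + l i.1)),
      permAssign n (fun x => k x + l x) σ (fun i j => if i = i₀ then v i (σ₀ j) else v i j) =
      permAssign n (fun x => k x + l x) (E σ) v := by
    intro σ
    funext i j
    by_cases hi : i < n
    · by_cases hj : j < k i + l i
      · rw [permAssign_apply_lt (m := fun x => k x + l x) σ _ hi hj, permAssign_apply_lt (m := fun x => k x + l x) (E σ) v hi hj]
        have hEσ : (E σ) ⟨i, hi⟩ = t ⟨i, hi⟩ * σ ⟨i, hi⟩ := rfl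
        rw [hEσ]
        by_cases h : i = i₀
        · rw [if_pos h]
          have : t ⟨i, hi⟩ = permFin (k i + l i) σ₀
              (fun j hj => hfix' j (by rw [h] at hj; exact hj)) := by
            rw [ht]; simp only [dif_pos h]
          rw [this]
          rfl
        · rw [if_neg h]
          have : t ⟨i, hi⟩ = 1 := by rw [ht]; simp only [dif_neg h]
          rw [this, one_mul]
      · rw [permAssign_apply_ge (m := fun x => k x + l x) σ _ (Or.inr hj), permAssign_apply_ge (m := fun x => k x + l x) (E σ) v (Or.inr hj)]
        by_cases h : i = i₀
        · rw [if_pos h]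
          subst h
          rw [hfix' j (by omega)]
          
        · rw [if_neg h]
    · rw [permAssign_apply_ge (m := fun x => k x + l x) σ _ (Or.inl hi), permAssign_apply_ge (m := fun x => k x + l x) (E σ) v (Or.inl hi)]
      rw [if_neg (by omega : ¬ i = i₀)]
  unfold starD
  apply Fintype.sum_bijective E E.bijective
  intro σ
  rw [key σ]

end Stmt0
namespace Stmt0
open Finset MvPolynomial

/-! ### ℂ-side range-based quantities -/

def pdR (n : ℕ) (k : ℕ → ℕ) (v : Va) : ℂ :=
  ∏ i ∈ range n, ∏ j ∈ range (k i), ∏ j' ∈ range (k (cyc n i)), (v i j - v (cyc n i) j')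

def monR (n : ℕ) (k : ℕ → ℕ) (v : Va) : ℂ := ∏ i ∈ range n, ∏ j ∈ range (k i), v i j

def monGR (n : ℕ) (k l : ℕ → ℕ) (w : Va) : ℂ := ∏ i ∈ range n, ∏ j ∈ range (l i), w i (k i + j)

def cycDenR (n : ℕ) (k l : ℕ → ℕ) (w : Va) : ℂ :=
  ∏ i ∈ range n, ∏ j ∈ range (k i), ∏ j' ∈ range (l (cyc n i)),
    (w i j - w (cyc n i) (k (cyc n i) + j'))

def cycPDenR (n : ℕ) (k l : ℕ → ℕ) (w : Va) : ℂ :=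
  ∏ i ∈ range n, ∏ j ∈ range (k i), ∏ j' ∈ range (l (cycP n i)),
    (w i j - w (cycP n i) (k (cycP n i) + j'))

def gfR (n : ℕ) (k l : ℕ → ℕ) (w : Va) : ℂ :=
  ∏ i ∈ range n, ∏ j ∈ range (l i), ∏ j' ∈ range (k (cyc n i)), (w i (k i + j) - w (cyc n i) j')

def diagDenR (n : ℕ) (k l : ℕ → ℕ) (w : Va) : ℂ :=
  ∏ i ∈ range n, ∏ j ∈ range (k i), ∏ j' ∈ range (l i), (w i j - w i (k i + j'))

def pdGR (n : ℕ) (k l : ℕ → ℕ) (w : Va) : ℂ :=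
  ∏ i ∈ range n, ∏ j ∈ range (l i), ∏ j' ∈ range (l (cyc n i)),
    (w i (k i + j) - w (cyc n i) (k (cyc n i) + j'))

def numR (n : ℕ) (q d : ℂ) (k l : ℕ → ℕ) (w : Va) : ℂ :=
  ∏ i ∈ range n,
    ((∏ j ∈ range (k i), ∏ j' ∈ range (l i), (w i j - (q ^ 2)⁻¹ * w i (k i + j'))) *
     (∏ j ∈ range (k i), ∏ j' ∈ range (l (cyc n i)),
        (d⁻¹ * w i j - q * w (cyc n i) (k (cyc n i) + j'))) *
     (∏ j ∈ range (k i), ∏ j' ∈ range (l (cycP n i)),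
        (w i j - (q * d⁻¹) * w (cycP n i) (k (cycP n i) + j'))))

def omgR (n : ℕ) (q d : ℂ) (k l : ℕ → ℕ) (w : Va) : ℂ :=
  ∏ i ∈ range n, ∏ i' ∈ range n, ∏ j ∈ range (k i), ∏ j' ∈ range (l i'),
    omg n q d i i' (w i j / w i' (k i' + j'))

def dgR (M : ℕ) (u : ℕ → ℂ) : ℂ := ∏ b ∈ range M, ∏ a ∈ range b, (u b - u a)

def crossR (K L : ℕ) (u : ℕ → ℂ) : ℂ := ∏ b ∈ range L, ∏ a ∈ range K, (u (K + b) - u a)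

def DeltaR (n : ℕ) (m : ℕ → ℕ) (v : Va) : ℂ := ∏ i ∈ range n, dgR (m i) (v i)

def DeltaGR (n : ℕ) (k l : ℕ → ℕ) (w : Va) : ℂ :=
  ∏ i ∈ range n, dgR (l i) (fun j => w i (k i + j))

def crossTotR (n : ℕ) (k l : ℕ → ℕ) (w : Va) : ℂ := ∏ i ∈ range n, crossR (k i) (l i) (w i)

def shiftVa (k : ℕ → ℕ) (w : Va) : Va := fun i j => w i (j + k i)

/-- the index produced by `permAssign` -/
def pidx (n : ℕ) (m : ℕ → ℕ) (σ : ∀ i : Fin n, Equiv.Perm (Fin (m i.1))) (i j : ℕ) : ℕ :=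
  if h : i < n then (if h2 : j < m i then ((σ ⟨i, h⟩) ⟨j, h2⟩).1 else j) else j

lemma permAssign_eq_pidx {n : ℕ} {m : ℕ → ℕ} (σ : ∀ i : Fin n, Equiv.Perm (Fin (m i.1)))
    (v : Va) (i j : ℕ) : permAssign n m σ v i j = v i (pidx n m σ i j) := by
  unfold permAssign pidx
  split <;> [skip; rfl]
  split <;> rfl

def sgnC {n : ℕ} {m : ℕ → ℕ} (σ : ∀ i : Fin n, Equiv.Perm (Fin (m i.1))) : ℂ :=
  ∏ i ∈ range n, if h : i < n then ((Equiv.Perm.sign (σ ⟨i, h⟩) : ℤ) : ℂ) else 1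

/-! ### conversions Fin ↔ range -/

lemma poleDenom_eq_pdR (n : ℕ) (k : ℕ → ℕ) (v : Va) : poleDenom n k v = pdR n k v := by
  unfold poleDenom pdR
  rw [← Fin.prod_univ_eq_prod_range
    (fun i => ∏ j ∈ range (k i), ∏ j' ∈ range (k (cyc n i)), (v i j - v (cyc n i) j'))]
  refine Finset.prod_congr rfl fun i _ => ?_
  rw [← Fin.prod_univ_eq_prod_range
    (fun j => ∏ j' ∈ range (k (cyc n i.1)), (v i.1 j - v (cyc n i.1) j'))]
  refine Finset.prod_congr rfl fun j _ => ?_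
  rw [← Fin.prod_univ_eq_prod_range (fun j' => v i.1 j.1 - v (cyc n i.1) j')]

lemma mon_eq_monR (n : ℕ) (k : ℕ → ℕ) (v : Va) :
    (∏ i : Fin n, ∏ j : Fin (k i.1), v i.1 j.1) = monR n k v := by
  unfold monR
  rw [← Fin.prod_univ_eq_prod_range (fun i => ∏ j ∈ range (k i), v i j)]
  refine Finset.prod_congr rfl fun i _ => ?_
  rw [← Fin.prod_univ_eq_prod_range (fun j => v i.1 j)]

lemma omg_eq_omgR (n : ℕ) (q d : ℂ) (k l : ℕ → ℕ) (w : Va) :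
    (∏ i : Fin n, ∏ i' : Fin n, ∏ j : Fin (k i.1), ∏ j' : Fin (l i'.1),
      omg n q d i.1 i'.1 (w i.1 j.1 / w i'.1 (k i'.1 + j'.1))) = omgR n q d k l w := by
  unfold omgR
  rw [← Fin.prod_univ_eq_prod_range (fun i => ∏ i' ∈ range n, ∏ j ∈ range (k i),
    ∏ j' ∈ range (l i'), omg n q d i i' (w i j / w i' (k i' + j')))]
  refine Finset.prod_congr rfl fun i _ => ?_
  rw [← Fin.prod_univ_eq_prod_range (fun i' => ∏ j ∈ range (k i.1),
    ∏ j' ∈ range (l i'), omg n q d i.1 i' (w i.1 j / w i' (k i' + j')))]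
  refine Finset.prod_congr rfl fun i' _ => ?_
  rw [← Fin.prod_univ_eq_prod_range (fun j =>
    ∏ j' ∈ range (l i'.1), omg n q d i.1 i'.1 (w i.1 j / w i'.1 (k i'.1 + j')))]
  refine Finset.prod_congr rfl fun j _ => ?_
  rw [← Fin.prod_univ_eq_prod_range (fun j' => omg n q d i.1 i'.1 (w i.1 j.1 / w i'.1 (k i'.1 + j')))]

/-! ### splitting lemmas -/

lemma double_range_split (K L K' L' : ℕ) (g : ℕ → ℕ → ℂ) :
    ∏ j ∈ range (K + L), ∏ j' ∈ range (K' + L'), g j j' =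
      ((∏ j ∈ range K, ∏ j' ∈ range K', g j j') *
       (∏ j ∈ range K, ∏ j' ∈ range L', g j (K' + j'))) *
      ((∏ j ∈ range L, ∏ j' ∈ range K', g (K + j) j') *
       (∏ j ∈ range L, ∏ j' ∈ range L', g (K + j) (K' + j'))) := by
  simp only [prod_range_add, prod_mul_distrib]
  ring

lemma pdR_split (n : ℕ) (k l : ℕ → ℕ) (w : Va) :
    pdR n (fun i => k i + l i) w =
      pdR n k w * cycDenR n k l w * gfR n k l w * pdGR n k l w := by
  unfold pdR cycDenR gfR pdGR
  rw [← prod_mul_distrib, ← prod_mul_distrib, ← prod_mul_distrib]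
  refine Finset.prod_congr rfl fun i _ => ?_
  rw [double_range_split (k i) (l i) (k (cyc n i)) (l (cyc n i))
    (fun a b => w i a - w (cyc n i) b)]
  ring

lemma mon_split (n : ℕ) (k l : ℕ → ℕ) (w : Va) :
    monR n (fun i => k i + l i) w = monR n k w * monGR n k l w := by
  unfold monR monGR
  rw [← prod_mul_distrib]
  exact Finset.prod_congr rfl fun i _ => by rw [prod_range_add]

lemma dgR_split (K L : ℕ) (u : ℕ → ℂ) :
    dgR (K + L) u = dgR K u * dgR L (fun j => u (K + j)) * crossR K L u := by
  unfold dgR crossR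
  rw [prod_range_add]
  have h : ∀ b ∈ range L, (∏ a ∈ range (K + b), (u (K + b) - u a)) =
      (∏ a ∈ range K, (u (K + b) - u a)) * ∏ a ∈ range b, (u (K + b) - u (K + a)) :=
    fun b _ => by rw [prod_range_add]
  rw [Finset.prod_congr rfl h, prod_mul_distrib]
  ring

lemma DeltaR_split (n : ℕ) (k l : ℕ → ℕ) (w : Va) :
    DeltaR n (fun i => k i + l i) w =
      DeltaR n k w * DeltaGR n k l w * crossTotR n k l w := by
  unfold DeltaR DeltaGR crossTotR
  rw [← prod_mul_distrib, ← prod_mul_distrib]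
  exact Finset.prod_congr rfl fun i _ => dgR_split (k i) (l i) (w i)

lemma pdGR_eq (n : ℕ) (k l : ℕ → ℕ) (w : Va) : pdGR n k l w = pdR n l (shiftVa k w) := by
  unfold pdGR pdR shiftVa
  refine Finset.prod_congr rfl fun i _ => Finset.prod_congr rfl fun j _ =>
    Finset.prod_congr rfl fun j' _ => ?_
  rw [Nat.add_comm (k i) j, Nat.add_comm (k (cyc n i)) j']

lemma monGR_eq (n : ℕ) (k l : ℕ → ℕ) (w : Va) : monGR n k l w = monR n l (shiftVa k w) := by
  unfold monGR monR shiftVa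
  refine Finset.prod_congr rfl fun i _ => Finset.prod_congr rfl fun j _ => ?_
  rw [Nat.add_comm (k i) j]

lemma neg_prod_pow (s : Finset ℕ) (f : ℕ → ℂ) (e : ℕ → ℕ) :
    ∏ i ∈ s, ((-1 : ℂ) ^ e i * f i) = (-1 : ℂ) ^ (∑ i ∈ s, e i) * ∏ i ∈ s, f i := by
  rw [prod_mul_distrib, prod_pow_eq_pow_sum]

lemma double_neg_swap (K L : ℕ) (g : ℕ → ℕ → ℂ) :
    ∏ j ∈ range K, ∏ j' ∈ range L, (g j j') =
      (-1 : ℂ) ^ (K * L) * ∏ j' ∈ range L, ∏ j ∈ range K, (- g j j') := by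
  rw [Finset.prod_comm]
  have : ∀ j' ∈ range L, (∏ j ∈ range K, g j j') = (-1 : ℂ)^K * ∏ j ∈ range K, (- g j j') := by
    intro j' _
    have h2 : ∀ j ∈ range K, g j j' = (-1 : ℂ) * (- g j j') := fun j _ => by ring
    rw [Finset.prod_congr rfl h2, prod_mul_distrib, Finset.prod_const, Finset.card_range]
  rw [Finset.prod_congr rfl this, prod_mul_distrib, Finset.prod_const, Finset.card_range, ← pow_mul]

lemma cycPDenR_eq_gfR (n : ℕ) (hn : 3 ≤ n) (k l : ℕ → ℕ) (w : Va) :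
    cycPDenR n k l w = (-1 : ℂ) ^ (∑ i ∈ range n, k (cyc n i) * l i) * gfR n k l w := by
  unfold cycPDenR gfR
  have h0 : (0:ℕ) < n := by omega
  set T : ℕ → ℂ := fun i => ∏ j ∈ range (k i), ∏ j' ∈ range (l (cycP n i)),
    (w i j - w (cycP n i) (k (cycP n i) + j')) with hT
  have step1 : ∏ i ∈ range n, T i = ∏ i ∈ range n, T (cyc n i) :=
    Finset.prod_nbij' (fun a => cycP n a) (fun a => cyc n a)
      (fun a _ => mem_range.2 (cycP_lt h0 a))
      (fun a _ => mem_range.2 (cyc_lt h0 a))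
      (fun a ha => cyc_cycP h0 (mem_range.1 ha))
      (fun a ha => cycP_cyc h0 (mem_range.1 ha))
      (fun a ha => by rw [cyc_cycP h0 (mem_range.1 ha)])
  rw [show (∏ i ∈ range n, ∏ j ∈ range (k i), ∏ j' ∈ range (l (cycP n i)),
      (w i j - w (cycP n i) (k (cycP n i) + j'))) = ∏ i ∈ range n, T i from rfl, step1]
  have step2 : ∀ i ∈ range n, T (cyc n i) = (-1 : ℂ) ^ (k (cyc n i) * l i) *
      ∏ j ∈ range (l i), ∏ j' ∈ range (k (cyc n i)), (w i (k i + j) - w (cyc n i) j') := by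
    intro i hi
    rw [hT]
    simp only []
    rw [cycP_cyc h0 (mem_range.1 hi)]
    rw [double_neg_swap (k (cyc n i)) (l i) (fun a b => w (cyc n i) a - w i (k i + b))]
    congr 1
    refine Finset.prod_congr rfl fun j' _ => Finset.prod_congr rfl fun j _ => ?_
    rw [neg_sub]
  rw [Finset.prod_congr rfl step2, neg_prod_pow]

end Stmt0
namespace Stmt0
open Finset MvPolynomial

lemma diagDenR_eq_cross (n : ℕ) (k l : ℕ → ℕ) (w : Va) :
    diagDenR n k l w = (-1 : ℂ) ^ (∑ i ∈ range n, k i * l i) * crossTotR n k l w := by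
  unfold diagDenR crossTotR crossR
  have step : ∀ i ∈ range n, (∏ j ∈ range (k i), ∏ j' ∈ range (l i), (w i j - w i (k i + j')))
      = (-1 : ℂ) ^ (k i * l i) * ∏ b ∈ range (l i), ∏ a ∈ range (k i), (w i (k i + b) - w i a) := by
    intro i _
    rw [double_neg_swap (k i) (l i) (fun a b => w i a - w i (k i + b))]
    congr 1
    exact Finset.prod_congr rfl fun j' _ => Finset.prod_congr rfl fun j _ => by rw [neg_sub]
  rw [Finset.prod_congr rfl step, neg_prod_pow]

lemma dgR_eq_fin (M : ℕ) (u : ℕ → ℂ) :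
    dgR M u = ∏ a : Fin M, ∏ b ∈ Finset.Ioi a, (u b.1 - u a.1) := by
  rw [Finset.prod_comm' (t' := (Finset.univ : Finset (Fin M))) (s' := fun b => Finset.Iio b)
    (by intro x y; simp [Finset.mem_Ioi, Finset.mem_Iio])]
  have step : ∀ b : Fin M, (∏ a ∈ Finset.Iio b, (u b.1 - u a.1)) =
      ∏ a ∈ range b.1, (u b.1 - u a) := by
    intro b
    rw [← Nat.Iio_eq_range, ← Fin.map_valEmbedding_Iio, Finset.prod_map]
    rfl
  rw [Finset.prod_congr rfl (fun b _ => step b),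
    Fin.prod_univ_eq_prod_range (fun b => ∏ a ∈ range b, (u b - u a))]
  rfl

lemma dg_fin_perm (M : ℕ) (τ : Equiv.Perm (Fin M)) (u : ℕ → ℂ) :
    (∏ a : Fin M, ∏ b ∈ Finset.Ioi a, (u (τ b).1 - u (τ a).1)) =
      ((Equiv.Perm.sign τ : ℤ) : ℂ) * ∏ a : Fin M, ∏ b ∈ Finset.Ioi a, (u b.1 - u a.1) := by
  have h3 : (Matrix.vandermonde (fun x : Fin M => u x.1)).submatrix τ id =
      Matrix.vandermonde (fun x : Fin M => u (τ x).1) := by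
    ext a b; simp [Matrix.vandermonde, Matrix.submatrix]
  have h2 := Matrix.det_permute τ (Matrix.vandermonde (fun x : Fin M => u x.1))
  rw [h3, Matrix.det_vandermonde, Matrix.det_vandermonde] at h2
  rw [h2]

lemma prod_pidx {n : ℕ} {m : ℕ → ℕ} (σ : ∀ i : Fin n, Equiv.Perm (Fin (m i.1)))
    (g : ℕ → ℂ) {i : ℕ} (hi : i < n) :
    ∏ j ∈ range (m i), g (pidx n m σ i j) = ∏ j ∈ range (m i), g j := by
  rw [← Fin.prod_univ_eq_prod_range (fun j => g (pidx n m σ i j)),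
    ← Fin.prod_univ_eq_prod_range g]
  have step : ∀ j : Fin (m i), g (pidx n m σ i j.1) = g (((σ ⟨i, hi⟩) ⟨j.1, j.2⟩).1) := by
    intro j; unfold pidx; rw [dif_pos hi, dif_pos j.2]
  rw [Finset.prod_congr rfl (fun j _ => step j)]
  exact Equiv.prod_comp (σ ⟨i, hi⟩) (fun x : Fin (m i) => g x.1)

lemma pdR_perm {n : ℕ} {m : ℕ → ℕ} (σ : ∀ i : Fin n, Equiv.Perm (Fin (m i.1))) (v : Va) :
    pdR n m (permAssign n m σ v) = pdR n m v := by
  unfold pdR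
  refine Finset.prod_congr rfl fun i hi => ?_
  have hin : i < n := mem_range.1 hi
  have hcin : cyc n i < n := cyc_lt (by omega) i
  have step1 : ∀ j ∈ range (m i),
      (∏ j' ∈ range (m (cyc n i)), (permAssign n m σ v i j - permAssign n m σ v (cyc n i) j')) =
      ∏ j' ∈ range (m (cyc n i)), (v i (pidx n m σ i j) - v (cyc n i) j') := by
    intro j _
    have : ∀ j' ∈ range (m (cyc n i)),
        (permAssign n m σ v i j - permAssign n m σ v (cyc n i) j') =
        (v i (pidx n m σ i j) - v (cyc n i) (pidx n m σ (cyc n i) j')) := by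
      intro j' _
      rw [permAssign_eq_pidx, permAssign_eq_pidx]
    rw [Finset.prod_congr rfl this]
    exact prod_pidx σ (fun b => v i (pidx n m σ i j) - v (cyc n i) b) hcin
  rw [Finset.prod_congr rfl step1]
  exact prod_pidx σ (fun a => ∏ j' ∈ range (m (cyc n i)), (v i a - v (cyc n i) j')) hin

lemma monR_perm {n : ℕ} {m : ℕ → ℕ} (σ : ∀ i : Fin n, Equiv.Perm (Fin (m i.1))) (v : Va) :
    monR n m (permAssign n m σ v) = monR n m v := by
  unfold monR
  refine Finset.prod_congr rfl fun i hi => ?_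
  have hin : i < n := mem_range.1 hi
  have step : ∀ j ∈ range (m i), permAssign n m σ v i j = v i (pidx n m σ i j) :=
    fun j _ => permAssign_eq_pidx σ v i j
  rw [Finset.prod_congr rfl step]
  exact prod_pidx σ (fun a => v i a) hin

lemma DeltaR_perm {n : ℕ} {m : ℕ → ℕ} (σ : ∀ i : Fin n, Equiv.Perm (Fin (m i.1))) (v : Va) :
    DeltaR n m (permAssign n m σ v) = sgnC σ * DeltaR n m v := by
  unfold DeltaR sgnC
  rw [← prod_mul_distrib]
  refine Finset.prod_congr rfl fun i hi => ?_
  have hin : i < n := mem_range.1 hi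
  rw [dif_pos hin]
  rw [dgR_eq_fin, dgR_eq_fin]
  have step : ∀ a : Fin (m i), ∀ b ∈ Finset.Ioi a,
      (permAssign n m σ v i b.1 - permAssign n m σ v i a.1) =
      (v i ((σ ⟨i, hin⟩ b).1) - v i ((σ ⟨i, hin⟩ a).1)) := by
    intro a b _
    rw [permAssign_apply_lt σ v hin b.2, permAssign_apply_lt σ v hin a.2]
  rw [Finset.prod_congr rfl (fun a _ => Finset.prod_congr rfl (step a))]
  exact dg_fin_perm (m i) (σ ⟨i, hin⟩) (v i)

lemma sgnC_mul_self {n : ℕ} {m : ℕ → ℕ} (σ : ∀ i : Fin n, Equiv.Perm (Fin (m i.1))) :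
    sgnC σ * sgnC σ = 1 := by
  unfold sgnC
  rw [← prod_mul_distrib]
  apply Finset.prod_eq_one
  intro i _
  split
  · rename_i h
    have h1 := Int.units_mul_self (Equiv.Perm.sign (σ ⟨i, h⟩))
    have : ((Equiv.Perm.sign (σ ⟨i, h⟩) : ℤ) : ℂ) * ((Equiv.Perm.sign (σ ⟨i, h⟩) : ℤ) : ℂ) =
        (((Equiv.Perm.sign (σ ⟨i, h⟩) * Equiv.Perm.sign (σ ⟨i, h⟩) : ℤˣ) : ℤ) : ℂ) := by
      push_cast; ring
    rw [this, h1]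
    norm_num
  · norm_num

end Stmt0
namespace Stmt0
open Finset MvPolynomial

lemma frac1 (A B c : ℂ) (hB : B ≠ 0) (hAB : A - B ≠ 0) :
    (A / B - c) / (A / B - 1) * (A - B) = A - c * B := by
  rw [div_sub' (a := A) (b := c) (c := B) hB, div_sub' (a := A) (b := 1) (c := B) hB, mul_one, div_div_div_cancel_right₀ hB,
    div_mul_cancel₀ _ hAB, mul_comm B c]

lemma frac2 (A B cq cd : ℂ) (hB : B ≠ 0) (hAB : A - B ≠ 0) :
    (cd * (A / B) - cq) / (A / B - 1) * (A - B) = cd * A - cq * B := by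
  rw [mul_div_assoc', div_sub' (a := cd * A) (b := cq) (c := B) hB, div_sub' (a := A) (b := 1) (c := B) hB, mul_one,
    div_div_div_cancel_right₀ hB, div_mul_cancel₀ _ hAB, mul_comm B cq]

lemma omg_diag_val (n : ℕ) (q d : ℂ) (i : ℕ) (z : ℂ) :
    omg n q d i i z = (z - (q ^ 2)⁻¹) / (z - 1) := by
  unfold omg; rw [if_pos rfl]

lemma omg_cyc_val (n : ℕ) (q d : ℂ) (i : ℕ) (h1 : cyc n i ≠ i) (z : ℂ) :
    omg n q d i (cyc n i) z = (d⁻¹ * z - q) / (z - 1) := by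
  unfold omg; rw [if_neg h1, if_pos rfl]

lemma omg_cycP_val (n : ℕ) (q d : ℂ) (i : ℕ) (h1 : cycP n i ≠ i) (h2 : ¬ cycP n i = cyc n i)
    (h3 : i = cyc n (cycP n i)) (z : ℂ) :
    omg n q d i (cycP n i) z = (z - q * d⁻¹) / (z - 1) := by
  unfold omg; rw [if_neg h1, if_neg h2, if_pos h3]

lemma omg_other (n : ℕ) (q d : ℂ) (i i' : ℕ) (h1 : i' ≠ i) (h2 : i' ≠ cyc n i)
    (h3 : ¬ i = cyc n i') (z : ℂ) : omg n q d i i' z = 1 := by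
  unfold omg; rw [if_neg h1, if_neg h2, if_neg h3]

lemma omg_total (n : ℕ) (hn : 3 ≤ n) (q d : ℂ) (k l : ℕ → ℕ) (w : Va)
    (hw : w ∈ Dom n (fun i => k i + l i)) :
    omgR n q d k l w * (diagDenR n k l w * cycDenR n k l w * cycPDenR n k l w) =
      numR n q d k l w := by
  classical
  have hwne : ∀ a ja, a < n → ja < k a + l a → w a ja ≠ 0 :=
    fun a ja ha hja => hw.1 a ha ja hja
  have hwd : ∀ a b ja jb, a < n → b < n → ja < k a + l a → jb < k b + l b →
      (a, ja) ≠ (b, jb) → w a ja ≠ w b jb :=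
    fun a b ja jb ha hb hja hjb hne => hw.2 a b ja jb ha hb hja hjb hne
  unfold omgR diagDenR cycDenR cycPDenR numR
  rw [← prod_mul_distrib, ← prod_mul_distrib, ← prod_mul_distrib]
  refine Finset.prod_congr rfl fun i hi => ?_
  have hin : i < n := mem_range.1 hi
  have h0 : (0:ℕ) < n := by omega
  have hci : cyc n i < n := cyc_lt h0 i
  have hcpi : cycP n i < n := cycP_lt h0 i
  have hne1 : cyc n i ≠ i := cyc_ne_self (by omega) hin
  have hne2 : cycP n i ≠ i := cycP_ne_self (by omega) hin
  have hne3 : cyc n i ≠ cycP n i := cyc_ne_cycP hn hin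
  set Bfun : ℕ → ℂ := fun i' => ∏ j ∈ range (k i), ∏ j' ∈ range (l i'),
    omg n q d i i' (w i j / w i' (k i' + j')) with hBfun
  have hsub : ({i, cyc n i, cycP n i} : Finset ℕ) ⊆ range n := by
    intro x hx
    simp only [Finset.mem_insert, Finset.mem_singleton] at hx
    rcases hx with rfl | rfl | rfl <;> exact mem_range.2 (by omega)
  have hone : ∀ x ∈ range n \ ({i, cyc n i, cycP n i} : Finset ℕ), Bfun x = 1 := by
    intro x hx
    rw [Finset.mem_sdiff, Finset.mem_insert, Finset.mem_insert, Finset.mem_singleton] at hx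
    push_neg at hx
    obtain ⟨hxr, hx1, hx2, hx3⟩ := hx
    have hxn : x < n := mem_range.1 hxr
    apply Finset.prod_eq_one; intro j _
    apply Finset.prod_eq_one; intro j' _
    exact omg_other n q d i x hx1 hx2
      (fun hcon => hx3 ((eq_cyc_iff h0 hin hxn).1 hcon)) _
  have hnm1 : i ∉ ({cyc n i, cycP n i} : Finset ℕ) := by
    simp only [Finset.mem_insert, Finset.mem_singleton]
    push_neg
    exact ⟨Ne.symm hne1, Ne.symm hne2⟩
  have hnm2 : cyc n i ∉ ({cycP n i} : Finset ℕ) := by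
    simp only [Finset.mem_singleton]; exact hne3
  have hsplit : (∏ i' ∈ range n, Bfun i') = Bfun i * Bfun (cyc n i) * Bfun (cycP n i) := by
    rw [← prod_sdiff hsub, Finset.prod_eq_one hone, one_mul, Finset.prod_insert hnm1,
      Finset.prod_insert hnm2, Finset.prod_singleton]
    ring
  rw [hsplit]
  have blockD : Bfun i * (∏ j ∈ range (k i), ∏ j' ∈ range (l i), (w i j - w i (k i + j'))) =
      ∏ j ∈ range (k i), ∏ j' ∈ range (l i), (w i j - (q ^ 2)⁻¹ * w i (k i + j')) := by
    rw [hBfun]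
    rw [← prod_mul_distrib]
    refine Finset.prod_congr rfl fun j hj => ?_
    rw [← prod_mul_distrib]
    refine Finset.prod_congr rfl fun j' hj' => ?_
    rw [omg_diag_val]
    exact frac1 _ _ _ (hwne i _ hin (by have := mem_range.1 hj'; omega))
      (sub_ne_zero.2 (hwd i i _ _ hin hin
        (by have := mem_range.1 hj; omega) (by have := mem_range.1 hj'; omega)
        (by have := mem_range.1 hj; simp; omega)))
  have blockC : Bfun (cyc n i) * (∏ j ∈ range (k i), ∏ j' ∈ range (l (cyc n i)),
      (w i j - w (cyc n i) (k (cyc n i) + j'))) =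
      ∏ j ∈ range (k i), ∏ j' ∈ range (l (cyc n i)),
        (d⁻¹ * w i j - q * w (cyc n i) (k (cyc n i) + j')) := by
    rw [hBfun]
    rw [← prod_mul_distrib]
    refine Finset.prod_congr rfl fun j hj => ?_
    rw [← prod_mul_distrib]
    refine Finset.prod_congr rfl fun j' hj' => ?_
    rw [omg_cyc_val n q d i hne1]
    exact frac2 _ _ _ _ (hwne (cyc n i) _ hci (by have := mem_range.1 hj'; omega))
      (sub_ne_zero.2 (hwd i (cyc n i) _ _ hin hci
        (by have := mem_range.1 hj; omega) (by have := mem_range.1 hj'; omega)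
        (by simp [Ne.symm hne1])))
  have blockP : Bfun (cycP n i) * (∏ j ∈ range (k i), ∏ j' ∈ range (l (cycP n i)),
      (w i j - w (cycP n i) (k (cycP n i) + j'))) =
      ∏ j ∈ range (k i), ∏ j' ∈ range (l (cycP n i)),
        (w i j - (q * d⁻¹) * w (cycP n i) (k (cycP n i) + j')) := by
    rw [hBfun]
    rw [← prod_mul_distrib]
    refine Finset.prod_congr rfl fun j hj => ?_
    rw [← prod_mul_distrib]
    refine Finset.prod_congr rfl fun j' hj' => ?_
    rw [omg_cycP_val n q d i hne2 (Ne.symm hne3) (cyc_cycP h0 hin).symm]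
    exact frac1 _ _ _ (hwne (cycP n i) _ hcpi (by have := mem_range.1 hj'; omega))
      (sub_ne_zero.2 (hwd i (cycP n i) _ _ hin hcpi
        (by have := mem_range.1 hj; omega) (by have := mem_range.1 hj'; omega)
        (by simp [Ne.symm hne2])))
  calc Bfun i * Bfun (cyc n i) * Bfun (cycP n i) *
        ((∏ j ∈ range (k i), ∏ j' ∈ range (l i), (w i j - w i (k i + j'))) *
         (∏ j ∈ range (k i), ∏ j' ∈ range (l (cyc n i)),
            (w i j - w (cyc n i) (k (cyc n i) + j'))) *
         (∏ j ∈ range (k i), ∏ j' ∈ range (l (cycP n i)),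
            (w i j - w (cycP n i) (k (cycP n i) + j')))) =
      (Bfun i * (∏ j ∈ range (k i), ∏ j' ∈ range (l i), (w i j - w i (k i + j')))) *
      (Bfun (cyc n i) * (∏ j ∈ range (k i), ∏ j' ∈ range (l (cyc n i)),
          (w i j - w (cyc n i) (k (cyc n i) + j')))) *
      (Bfun (cycP n i) * (∏ j ∈ range (k i), ∏ j' ∈ range (l (cycP n i)),
          (w i j - w (cycP n i) (k (cycP n i) + j')))) := by ring
    _ = _ := by rw [blockD, blockC, blockP]

end Stmt0
namespace Stmt0
open Finset MvPolynomial

abbrev MvP := MvPolynomial (ℕ × ℕ) ℂ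

def XP (i j : ℕ) : MvP := X (i, j)

def NumPolyR (n : ℕ) (q d : ℂ) (k l : ℕ → ℕ) : MvP :=
  ∏ i ∈ range n,
    ((∏ j ∈ range (k i), ∏ j' ∈ range (l i), (XP i j - C ((q ^ 2)⁻¹) * XP i (k i + j'))) *
     (∏ j ∈ range (k i), ∏ j' ∈ range (l (cyc n i)),
        (C d⁻¹ * XP i j - C q * XP (cyc n i) (k (cyc n i) + j'))) *
     (∏ j ∈ range (k i), ∏ j' ∈ range (l (cycP n i)),
        (XP i j - C (q * d⁻¹) * XP (cycP n i) (k (cycP n i) + j'))))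

def DFpolyR (n : ℕ) (k : ℕ → ℕ) : MvP :=
  ∏ i ∈ range n, ∏ b ∈ range (k i), ∏ a ∈ range b, (XP i b - XP i a)

def DGpolyR (n : ℕ) (k l : ℕ → ℕ) : MvP :=
  ∏ i ∈ range n, ∏ b ∈ range (l i), ∏ a ∈ range b, (XP i (k i + b) - XP i (k i + a))

def MonFpoly (n : ℕ) (k : ℕ → ℕ) : MvP := ∏ i ∈ range n, ∏ j ∈ range (k i), XP i j

def MonGpoly (n : ℕ) (k l : ℕ → ℕ) : MvP := ∏ i ∈ range n, ∏ j ∈ range (l i), XP i (k i + j)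

def vhat (v : Va) : ℕ × ℕ → ℂ := fun p => v p.1 p.2

lemma eval_NumPolyR (n : ℕ) (q d : ℂ) (k l : ℕ → ℕ) (w : Va) :
    eval (vhat w) (NumPolyR n q d k l) = numR n q d k l w := by
  simp [NumPolyR, numR, XP, vhat]

lemma eval_DFpolyR (n : ℕ) (k : ℕ → ℕ) (w : Va) :
    eval (vhat w) (DFpolyR n k) = DeltaR n k w := by
  simp [DFpolyR, DeltaR, dgR, XP, vhat]

lemma eval_DGpolyR (n : ℕ) (k l : ℕ → ℕ) (w : Va) :
    eval (vhat w) (DGpolyR n k l) = DeltaGR n k l w := by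
  simp [DGpolyR, DeltaGR, dgR, XP, vhat]

lemma eval_MonFpoly (n : ℕ) (k : ℕ → ℕ) (w : Va) :
    eval (vhat w) (MonFpoly n k) = monR n k w := by
  simp [MonFpoly, monR, XP, vhat]

lemma eval_MonGpoly (n : ℕ) (k l : ℕ → ℕ) (w : Va) :
    eval (vhat w) (MonGpoly n k l) = monGR n k l w := by
  simp [MonGpoly, monGR, XP, vhat]

def rmap (n : ℕ) (m : ℕ → ℕ) (σ : ∀ i : Fin n, Equiv.Perm (Fin (m i.1))) : ℕ × ℕ → ℕ × ℕ :=
  fun p => (p.1, pidx n m σ p.1 p.2)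

lemma vhat_comp_rmap {n : ℕ} {m : ℕ → ℕ} (σ : ∀ i : Fin n, Equiv.Perm (Fin (m i.1))) (v : Va) :
    vhat v ∘ rmap n m σ = vhat (permAssign n m σ v) := by
  funext p
  show v p.1 (pidx n m σ p.1 p.2) = permAssign n m σ v p.1 p.2
  rw [permAssign_eq_pidx]

lemma eval_rename_rmap {n : ℕ} {m : ℕ → ℕ} (σ : ∀ i : Fin n, Equiv.Perm (Fin (m i.1)))
    (v : Va) (P : MvP) :
    eval (vhat v) (rename (rmap n m σ) P) = eval (vhat (permAssign n m σ v)) P := by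
  rw [eval_rename, vhat_comp_rmap]

def shmap (k : ℕ → ℕ) : ℕ × ℕ → ℕ × ℕ := fun p => (p.1, p.2 + k p.1)

lemma eval_rename_shmap (k : ℕ → ℕ) (w : Va) (P : MvP) :
    eval (vhat w) (rename (shmap k) P) = eval (vhat (shiftVa k w)) P := by
  rw [eval_rename]
  rfl

def Qpoly (n : ℕ) (q d : ℂ) (k l : ℕ → ℕ) (fF fG : MvP) (NF NG : ℕ) : MvP :=
  fF * rename (shmap k) fG * NumPolyR n q d k l * DFpolyR n k * DGpolyR n k l *
    (MonFpoly n k) ^ NG * (MonGpoly n k l) ^ NF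

def csign {n : ℕ} {m : ℕ → ℕ} (k l : ℕ → ℕ) (σ : ∀ i : Fin n, Equiv.Perm (Fin (m i.1))) : ℂ :=
  (-1 : ℂ) ^ (∑ i ∈ range n, k (cyc n i) * l i) * (-1 : ℂ) ^ (∑ i ∈ range n, k i * l i) * sgnC σ

lemma per_sigma (n : ℕ) (hn : 3 ≤ n) (q d : ℂ) (k l : ℕ → ℕ) (F G : Va → ℂ)
    (fF fG : MvP) (NF NG : ℕ)
    (hfF : ∀ u ∈ Dom n k, F u * poleDenom n k u *
      (∏ i : Fin n, ∏ j : Fin (k i.1), u i.1 j.1) ^ NF = eval (vhat u) fF)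
    (hfG : ∀ u ∈ Dom n l, G u * poleDenom n l u *
      (∏ i : Fin n, ∏ j : Fin (l i.1), u i.1 j.1) ^ NG = eval (vhat u) fG)
    (v : Va) (hv : v ∈ Dom n (fun i => k i + l i))
    (σ : ∀ i : Fin n, Equiv.Perm (Fin (k i.1 + l i.1))) :
    (F (permAssign n (fun x => k x + l x) σ v) *
      G (fun a b => permAssign n (fun x => k x + l x) σ v a (b + k a)) *
      (∏ a : Fin n, ∏ b : Fin n, ∏ c : Fin (k a.1), ∏ e : Fin (l b.1),
        omg n q d a.1 b.1 (permAssign n (fun x => k x + l x) σ v a.1 c.1 /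
          permAssign n (fun x => k x + l x) σ v b.1 (k b.1 + e.1)))) *
      (poleDenom n (fun i => k i + l i) v * DeltaR n (fun i => k i + l i) v *
        (∏ i : Fin n, ∏ j : Fin (k i.1 + l i.1), v i.1 j.1) ^ (NF + NG)) =
      eval (vhat v) (C (csign (m := fun x => k x + l x) k l σ) * rename (rmap n (fun x => k x + l x) σ)
        (Qpoly n q d k l fF fG NF NG)) := by
  set m : ℕ → ℕ := fun x => k x + l x with hm
  set w : Va := permAssign n m σ v with hw
  have hwDom : w ∈ Dom n m := permAssign_mem_Dom σ hv
  have hwDomk : w ∈ Dom n k := Dom.mono (fun x => Nat.le_add_right _ _) hwDom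
  have hshDom : shiftVa k w ∈ Dom n l := shift_mem_Dom hwDom
  have hps : pdR n m w = pdR n k w * cycDenR n k l w * gfR n k l w * pdGR n k l w :=
    pdR_split n k l w
  have a1 : poleDenom n m v = pdR n k w * cycDenR n k l w * gfR n k l w *
      poleDenom n l (shiftVa k w) := by
    rw [poleDenom_eq_pdR, ← pdR_perm (m := m) σ v, ← hw, hps, pdGR_eq, ← poleDenom_eq_pdR n k w, ← poleDenom_eq_pdR n l (shiftVa k w)]
  have hds : DeltaR n m w = DeltaR n k w * DeltaGR n k l w * crossTotR n k l w :=
    DeltaR_split n k l w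
  have a2 : DeltaR n m v = sgnC (m := m) σ *
      (DeltaR n k w * DeltaGR n k l w * crossTotR n k l w) := by
    have h := DeltaR_perm (m := m) σ v
    rw [← hw] at h
    rw [← hds]
    calc DeltaR n m v = sgnC (m := m) σ * sgnC (m := m) σ * DeltaR n m v := by rw [sgnC_mul_self (m := m) σ, one_mul]
      _ = sgnC (m := m) σ * DeltaR n m w := by rw [mul_assoc, ← h]
  have hms : monR n m w = monR n k w * monGR n k l w := mon_split n k l w
  have a3 : (∏ i : Fin n, ∏ j : Fin (k i.1 + l i.1), v i.1 j.1) =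
      monR n k w * monGR n k l w := by
    have h0 : (∏ i : Fin n, ∏ j : Fin (k i.1 + l i.1), v i.1 j.1) = monR n m v :=
      mon_eq_monR n m v
    rw [h0, ← monR_perm (m := m) σ v, ← hw, hms]
  have a8 : numR n q d k l w = omgR n q d k l w *
      (((-1 : ℂ) ^ (∑ i ∈ range n, k i * l i) * crossTotR n k l w) * cycDenR n k l w *
       ((-1 : ℂ) ^ (∑ i ∈ range n, k (cyc n i) * l i) * gfR n k l w)) := by
    rw [← diagDenR_eq_cross, ← cycPDenR_eq_gfR n hn, ← omg_total n hn q d k l w hwDom]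
  have a6 : eval (vhat w) fF = F w * poleDenom n k w * (monR n k w) ^ NF := by
    rw [← hfF w hwDomk, mon_eq_monR]
  have a7 : eval (vhat (shiftVa k w)) fG = G (shiftVa k w) * poleDenom n l (shiftVa k w) *
      (monGR n k l w) ^ NG := by
    rw [← hfG _ hshDom, mon_eq_monR, monGR_eq]
  have a9 : poleDenom n k w = pdR n k w := poleDenom_eq_pdR n k w
  have a4 : (∏ a : Fin n, ∏ b : Fin n, ∏ c : Fin (k a.1), ∏ e : Fin (l b.1),
      omg n q d a.1 b.1 (w a.1 c.1 / w b.1 (k b.1 + e.1))) = omgR n q d k l w :=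
    omg_eq_omgR n q d k l w
  have e2 : (-1 : ℂ) ^ (∑ i ∈ range n, k (cyc n i) * l i) *
      (-1 : ℂ) ^ (∑ i ∈ range n, k (cyc n i) * l i) = 1 := by
    rw [← mul_pow]; norm_num
  have e3 : (-1 : ℂ) ^ (∑ i ∈ range n, k i * l i) *
      (-1 : ℂ) ^ (∑ i ∈ range n, k i * l i) = 1 := by
    rw [← mul_pow]; norm_num
  rw [map_mul, eval_C, eval_rename_rmap (m := m) σ v, ← hw]
  simp only [Qpoly, map_mul, map_pow]
  rw [eval_rename_shmap, eval_NumPolyR, eval_DFpolyR, eval_DGpolyR, eval_MonFpoly,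
    eval_MonGpoly, a6, a7, a8, a9, a1, a2, a3, a4, csign]
  rw [show G (fun a b => w a (b + k a)) = G (shiftVa k w) from rfl]
  trans (sgnC (m := m) σ * (F w * G (shiftVa k w) * omgR n q d k l w * pdR n k w * poleDenom n l (shiftVa k w) * cycDenR n k l w * gfR n k l w * crossTotR n k l w * DeltaR n k w * DeltaGR n k l w * monR n k w ^ (NF + NG) * monGR n k l w ^ (NF + NG)))
  · ring
  trans (((-1 : ℂ) ^ (∑ i ∈ range n, k (cyc n i) * l i) *
      (-1 : ℂ) ^ (∑ i ∈ range n, k (cyc n i) * l i)) *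
      (((-1 : ℂ) ^ (∑ i ∈ range n, k i * l i) *
      (-1 : ℂ) ^ (∑ i ∈ range n, k i * l i)) * (sgnC (m := m) σ * (F w * G (shiftVa k w) * omgR n q d k l w * pdR n k w * poleDenom n l (shiftVa k w) * cycDenR n k l w * gfR n k l w * crossTotR n k l w * DeltaR n k w * DeltaGR n k l w * monR n k w ^ (NF + NG) * monGR n k l w ^ (NF + NG)))))
  · rw [e2, e3, one_mul, one_mul]
  ring

end Stmt0
namespace Stmt0
open Finset MvPolynomial

def subst1 (p₀ p₁ : ℕ × ℕ) : MvP →ₐ[ℂ] MvP :=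
  aeval (fun p => if p = p₀ then X p₁ else X p)

lemma subst1_X (p₀ p₁ t : ℕ × ℕ) :
    subst1 p₀ p₁ (X t) = if t = p₀ then X p₁ else X t := by
  simp [subst1]

lemma dvd_sub_subst1 (p₀ p₁ : ℕ × ℕ) (P : MvP) :
    (X p₀ - X p₁ : MvP) ∣ (P - subst1 p₀ p₁ P) := by
  induction P using MvPolynomial.induction_on with
  | C a => simp
  | add p r hp hr =>
    rw [map_add, show p + r - (subst1 p₀ p₁ p + subst1 p₀ p₁ r) =
      (p - subst1 p₀ p₁ p) + (r - subst1 p₀ p₁ r) by ring]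
    exact dvd_add hp hr
  | mul_X p s hp =>
    rw [map_mul, subst1_X, show p * X s - subst1 p₀ p₁ p * (if s = p₀ then X p₁ else X s) =
      (p - subst1 p₀ p₁ p) * X s + subst1 p₀ p₁ p * (X s - (if s = p₀ then X p₁ else X s))
      by ring]
    apply dvd_add
    · exact hp.mul_right _
    · apply Dvd.dvd.mul_left
      split
      · rename_i h; rw [h]
      · rw [sub_self]
        exact dvd_zero _

lemma subst1_eq_zero_dvd (p₀ p₁ : ℕ × ℕ) (P : MvP) (h : subst1 p₀ p₁ P = 0) :
    (X p₀ - X p₁ : MvP) ∣ P := by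
  have h2 := dvd_sub_subst1 p₀ p₁ P
  rwa [h, sub_zero] at h2

lemma subst1_linear (p₀ p₁ : ℕ × ℕ) (hne : p₁ ≠ p₀) :
    subst1 p₀ p₁ ((X p₀ - X p₁ : MvP)) = 0 := by
  rw [map_sub, subst1_X, subst1_X, if_pos rfl, if_neg hne, sub_self]

lemma prime_linear (p₀ p₁ : ℕ × ℕ) (hne : p₀ ≠ p₁) : Prime (X p₀ - X p₁ : MvP) := by
  refine ⟨?_, ?_, ?_⟩
  · intro h0
    have h1 := congrArg (eval (fun p => if p = p₀ then (1 : ℂ) else 0)) h0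
    simp [Ne.symm hne] at h1
  · intro hu
    have h1 := hu.map (eval (fun _ : ℕ × ℕ => (0 : ℂ)))
    simp [isUnit_iff_ne_zero] at h1
  · intro a b hab
    obtain ⟨c, hc⟩ := hab
    have h2 : subst1 p₀ p₁ a * subst1 p₀ p₁ b = 0 := by
      rw [← map_mul, hc, map_mul, subst1_linear p₀ p₁ (Ne.symm hne), zero_mul]
    rcases mul_eq_zero.1 h2 with h | h
    · exact Or.inl (subst1_eq_zero_dvd _ _ _ h)
    · exact Or.inr (subst1_eq_zero_dvd _ _ _ h)

lemma not_dvd_linear (p₀ p₁ p₂ p₃ : ℕ × ℕ) (h23 : p₂ ≠ p₃)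
    (hdiff : (p₂ ≠ p₀ ∧ p₂ ≠ p₁) ∨ (p₃ ≠ p₀ ∧ p₃ ≠ p₁)) :
    ¬ (X p₀ - X p₁ : MvP) ∣ (X p₂ - X p₃) := by
  rintro ⟨c, hc⟩
  rcases hdiff with ⟨h1, h2⟩ | ⟨h1, h2⟩
  · have h3 := congrArg (eval (fun p => if p = p₂ then (1 : ℂ) else 0)) hc
    simp [Ne.symm h23, Ne.symm h1, Ne.symm h2] at h3
  · have h3 := congrArg (eval (fun p => if p = p₃ then (1 : ℂ) else 0)) hc
    simp [h23, Ne.symm h1, Ne.symm h2] at h3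

lemma prod_primes_dvd' {ι : Type*} [DecidableEq ι] (s : Finset ι) (g : ι → MvP) (T : MvP)
    (hp : ∀ x ∈ s, Prime (g x)) (hd : ∀ x ∈ s, g x ∣ T)
    (hnd : ∀ x ∈ s, ∀ y ∈ s, x ≠ y → ¬ g x ∣ g y) : (∏ x ∈ s, g x) ∣ T := by
  induction s using Finset.induction_on with
  | empty => simpa using dvd_refl T -- ∏ ∅ = 1 ∣ T
  | insert a s' ha ih =>
    obtain ⟨R, hR⟩ := ih (fun x hx => hp x (mem_insert_of_mem hx))
      (fun x hx => hd x (mem_insert_of_mem hx))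
      (fun x hx y hy hxy => hnd x (mem_insert_of_mem hx) y (mem_insert_of_mem hy) hxy)
    have hga : g a ∣ (∏ x ∈ s', g x) * R := hR ▸ hd a (mem_insert_self _ _)
    have hpa := hp a (mem_insert_self _ _)
    rcases hpa.dvd_mul.1 hga with h | h
    · exfalso
      obtain ⟨x, hx, hdx⟩ := hpa.exists_mem_finset_dvd h
      exact hnd a (mem_insert_self _ _) x (mem_insert_of_mem hx)
        (fun hcon => ha (hcon ▸ hx)) hdx
    · obtain ⟨R', hR'⟩ := h
      refine ⟨R', ?_⟩
      rw [Finset.prod_insert ha, hR, hR']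
      ring

lemma sgnC_update {n : ℕ} {m : ℕ → ℕ} (σ : ∀ i : Fin n, Equiv.Perm (Fin (m i.1)))
    (iF : Fin n) (a b : Fin (m iF.1)) (hab : a ≠ b) :
    sgnC (Function.update σ iF (Equiv.swap a b * σ iF)) = - sgnC σ := by
  classical
  unfold sgnC
  have hmem : iF.1 ∈ range n := mem_range.2 iF.2
  rw [← Finset.mul_prod_erase _ _ hmem, ← Finset.mul_prod_erase _ _ hmem]
  have hrest : (∏ x ∈ (range n).erase iF.1, (if h : x < n then
      ((Equiv.Perm.sign ((Function.update σ iF (Equiv.swap a b * σ iF)) ⟨x, h⟩) : ℤ) : ℂ)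
      else 1)) = ∏ x ∈ (range n).erase iF.1, (if h : x < n then
      ((Equiv.Perm.sign (σ ⟨x, h⟩) : ℤ) : ℂ) else 1) := by
    refine Finset.prod_congr rfl fun x hx => ?_
    have hxne : x ≠ iF.1 := (Finset.mem_erase.1 hx).1
    split
    · rename_i h
      rw [Function.update_of_ne (fun hcon => hxne (congrArg Fin.val hcon))]
    · rfl
  rw [hrest, dif_pos iF.2, dif_pos iF.2,
    show (⟨iF.1, iF.2⟩ : Fin n) = iF from rfl, Function.update_self]
  have hs : Equiv.Perm.sign (Equiv.swap a b * σ iF) = - Equiv.Perm.sign (σ iF) := by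
    rw [map_mul, Equiv.Perm.sign_swap hab, neg_one_mul]
  rw [hs]
  push_cast
  ring

lemma swapfun_values (p₀ p₁ : ℕ × ℕ) (h1 : p₁ ≠ p₀) :
    ((fun p => if p = p₀ then X p₁ else X p) ∘
      (fun p => if p = p₀ then p₁ else if p = p₁ then p₀ else p)) =
    (fun p : ℕ × ℕ => if p = p₀ then (X p₁ : MvP) else X p) := by
  funext p
  by_cases hp0 : p = p₀
  · subst hp0
    simp [h1]
  · by_cases hp1 : p = p₁
    · subst hp1
      simp [hp0]
    · simp [hp0, hp1]

lemma subst1_comp_swap (p₀ p₁ : ℕ × ℕ) (h : p₁ ≠ p₀) (P : MvP) :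
    subst1 p₀ p₁ (rename (fun p => if p = p₀ then p₁ else if p = p₁ then p₀ else p) P) =
      subst1 p₀ p₁ P := by
  show (aeval _) (rename _ P) = _
  rw [aeval_rename, swapfun_values p₀ p₁ h]
  rfl

end Stmt0
namespace Stmt0
open Finset MvPolynomial

lemma subst1_C (p₀ p₁ : ℕ × ℕ) (c : ℂ) : subst1 p₀ p₁ (C c) = C c := by
  simp [subst1]

lemma rmap_update {n : ℕ} {m : ℕ → ℕ} (σ : ∀ i : Fin n, Equiv.Perm (Fin (m i.1)))
    (iF : Fin n) (a b : Fin (m iF.1)) :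
    rmap n m (Function.update σ iF (Equiv.swap a b * σ iF)) = (fun p =>
      if p = (iF.1, a.1) then (iF.1, b.1) else if p = (iF.1, b.1) then (iF.1, a.1) else p) ∘
      rmap n m σ := by
  classical
  obtain ⟨iv, hiv⟩ := iF
  funext p
  obtain ⟨pi, pj⟩ := p
  simp only [Function.comp, rmap]
  by_cases hieq : pi = iv
  · subst hieq
    -- same group
    have key : pidx n m (Function.update σ ⟨pi, hiv⟩ (Equiv.swap a b * σ ⟨pi, hiv⟩)) pi pj =
        (if pidx n m σ pi pj = a.1 then b.1 else if pidx n m σ pi pj = b.1 then a.1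
          else pidx n m σ pi pj) := by
      unfold pidx
      rw [dif_pos hiv, dif_pos hiv]
      by_cases hpj : pj < m pi
      · rw [dif_pos hpj, dif_pos hpj]
        have hupd : (Function.update σ ⟨pi, hiv⟩ (Equiv.swap a b * σ ⟨pi, hiv⟩)) ⟨pi, hiv⟩ =
            Equiv.swap a b * σ ⟨pi, hiv⟩ := Function.update_self _ _ _
        rw [hupd]
        set x : Fin (m pi) := (σ ⟨pi, hiv⟩) ⟨pj, hpj⟩ with hx
        show ((Equiv.swap a b) x).1 = _
        rw [Equiv.swap_apply_def]
        by_cases hxa : x = a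
        · rw [if_pos hxa, if_pos (congrArg Fin.val hxa)]
        · rw [if_neg hxa, if_neg (fun hcon => hxa (Fin.val_injective hcon))]
          by_cases hxb : x = b
          · rw [if_pos hxb, if_pos (congrArg Fin.val hxb)]
          · rw [if_neg hxb, if_neg (fun hcon => hxb (Fin.val_injective hcon))]
      · rw [dif_neg hpj, dif_neg hpj]
        have ha' : (a : ℕ) < m pi := a.2
        have hb' : (b : ℕ) < m pi := b.2
        rw [if_neg (by omega : ¬ pj = (a : ℕ)), if_neg (by omega : ¬ pj = (b : ℕ))]
    rw [key]
    by_cases h1 : pidx n m σ pi pj = (a : ℕ)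
    · simp [h1, Prod.ext_iff]
    · by_cases h2 : pidx n m σ pi pj = (b : ℕ)
      · have hba : (b : ℕ) ≠ (a : ℕ) := fun hc => h1 (h2.trans hc)
        simp [h1, h2, hba, Prod.ext_iff]
      · simp [h1, h2, Prod.ext_iff]
  · -- different group
    have key : pidx n m (Function.update σ ⟨iv, hiv⟩ (Equiv.swap a b * σ ⟨iv, hiv⟩)) pi pj =
        pidx n m σ pi pj := by
      unfold pidx
      by_cases hpi : pi < n
      · rw [dif_pos hpi, dif_pos hpi]
        by_cases hpj : pj < m pi
        · rw [dif_pos hpj, dif_pos hpj]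
          rw [Function.update_of_ne (fun hcon => hieq (congrArg Fin.val hcon))]
        · rw [dif_neg hpj, dif_neg hpj]
      · rw [dif_neg hpi, dif_neg hpi]
    rw [key]
    simp [hieq]

def Tpoly (n : ℕ) (q d : ℂ) (k l : ℕ → ℕ) (fF fG : MvP) (NF NG : ℕ) : MvP :=
  ∑ σ : ∀ i : Fin n, Equiv.Perm (Fin (k i.1 + l i.1)),
    C (csign (m := fun x => k x + l x) k l σ) *
      rename (rmap n (fun x => k x + l x) σ) (Qpoly n q d k l fF fG NF NG)

lemma linear_dvd_T (n : ℕ) (q d : ℂ) (k l : ℕ → ℕ) (fF fG : MvP) (NF NG : ℕ)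
    (iF : Fin n) (av bv : ℕ) (ha : av < k iF.1 + l iF.1) (hb : bv < k iF.1 + l iF.1)
    (hab : av ≠ bv) :
    (X (iF.1, av) - X (iF.1, bv) : MvP) ∣ Tpoly n q d k l fF fG NF NG := by
  classical
  set p₀ : ℕ × ℕ := (iF.1, av) with hp₀
  set p₁ : ℕ × ℕ := (iF.1, bv) with hp₁
  have hne : p₁ ≠ p₀ := by simp [hp₀, hp₁]; omega
  set af : Fin (k iF.1 + l iF.1) := ⟨av, ha⟩ with haf
  set bf : Fin (k iF.1 + l iF.1) := ⟨bv, hb⟩ with hbf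
  have hafbf : af ≠ bf := by simp [haf, hbf, Fin.ext_iff]; omega
  apply subst1_eq_zero_dvd
  rw [Tpoly, map_sum]
  apply Finset.sum_involution
    (g := fun σ _ => Function.update σ iF (Equiv.swap af bf * σ iF))
  · intro σ _
    have hu : subst1 p₀ p₁ (rename (rmap n (fun x => k x + l x)
        (Function.update σ iF (Equiv.swap af bf * σ iF))) (Qpoly n q d k l fF fG NF NG)) =
        subst1 p₀ p₁ (rename (rmap n (fun x => k x + l x) σ) (Qpoly n q d k l fF fG NF NG)) := by
      rw [rmap_update (m := fun x => k x + l x) σ iF af bf, ← rename_rename]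
      exact subst1_comp_swap p₀ p₁ hne _
    have hcs : csign (m := fun x => k x + l x) k l
        (Function.update σ iF (Equiv.swap af bf * σ iF)) =
        - csign (m := fun x => k x + l x) k l σ := by
      unfold csign
      rw [sgnC_update (m := fun x => k x + l x) σ iF af bf hafbf]
      ring
    rw [map_mul, map_mul, subst1_C, subst1_C, hu, hcs, map_neg]
    ring
  · intro σ _ _
    intro hcon
    have h2 := congrFun hcon iF
    rw [Function.update_self] at h2
    have h3 : Equiv.swap af bf = 1 := by
      have := congrArg (· * (σ iF)⁻¹) h2
      simpa [mul_assoc] using this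
    exact hafbf (Equiv.swap_eq_one_iff.1 h3)
  · intro σ _
    rw [Function.update_self, Function.update_idem, ← mul_assoc, Equiv.swap_mul_self,
      one_mul, Function.update_eq_self]
  · intro σ _
    exact Finset.mem_univ _

lemma DM_dvd_T (n : ℕ) (q d : ℂ) (k l : ℕ → ℕ) (fF fG : MvP) (NF NG : ℕ) :
    DFpolyR n (fun x => k x + l x) ∣ Tpoly n q d k l fF fG NF NG := by
  classical
  have hflat : DFpolyR n (fun x => k x + l x) =
      ∏ t ∈ (range n).sigma (fun i => (range (k i + l i)).sigma (fun b => range b)),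
        (X (t.1, t.2.1) - X (t.1, t.2.2) : MvP) := by
    rw [Finset.prod_sigma]
    refine Finset.prod_congr rfl fun i _ => ?_
    rw [Finset.prod_sigma]
    rfl
  rw [hflat]
  apply prod_primes_dvd'
  · rintro ⟨i, b, a⟩ ht
    simp only [Finset.mem_sigma, mem_range] at ht
    exact prime_linear _ _ (by simp only [ne_eq, Prod.mk.injEq]; omega)
  · rintro ⟨i, b, a⟩ ht
    simp only [Finset.mem_sigma, mem_range] at ht
    obtain ⟨hi, hb, ha⟩ := ht
    exact linear_dvd_T n q d k l fF fG NF NG ⟨i, hi⟩ b a (by show b < k i + l i; omega)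
      (by show a < k i + l i; omega) (by omega)
  · rintro ⟨i, b, a⟩ ht ⟨i', b', a'⟩ ht' hne2
    simp only [Finset.mem_sigma, mem_range] at ht ht'
    obtain ⟨hi, hb, ha⟩ := ht
    obtain ⟨hi', hb', ha'⟩ := ht'
    apply not_dvd_linear
    · simp only [ne_eq, Prod.mk.injEq]; omega
    · by_cases hii : i' = i
      · subst hii
        have hne3 : ¬ (b = b' ∧ a = a') := by
          rintro ⟨rfl, rfl⟩
          exact hne2 rfl
        by_cases hbb : b' = b
        · subst hbb
          right
          constructor <;> · simp only [ne_eq, Prod.mk.injEq]; omega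
        · by_cases hba : b' = a
          · subst hba
            right
            constructor <;> · simp only [ne_eq, Prod.mk.injEq]; omega
          · left
            constructor <;> · simp only [ne_eq, Prod.mk.injEq]; omega
      · left
        constructor <;> · simp only [ne_eq, Prod.mk.injEq]; omega

lemma DeltaR_ne_zero (n : ℕ) (m : ℕ → ℕ) (v : Va) (hv : v ∈ Dom n m) : DeltaR n m v ≠ 0 := by
  unfold DeltaR dgR
  rw [Finset.prod_ne_zero_iff]
  intro i hi
  rw [Finset.prod_ne_zero_iff]
  intro bb hb
  rw [Finset.prod_ne_zero_iff]
  intro aa ha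
  have hin := mem_range.1 hi
  have hbn := mem_range.1 hb
  have han := mem_range.1 ha
  refine sub_ne_zero.2 (hv.2 i i bb aa hin hin hbn (by omega) ?_)
  simp only [ne_eq, Prod.mk.injEq]
  omega

lemma poleCond_starD (n : ℕ) (hn : 3 ≤ n) (q d : ℂ) (k l : ℕ → ℕ) {F G : Va → ℂ}
    (hF : SK n q d k F) (hG : SK n q d l G) :
    PoleCond n (fun i => k i + l i) (starD n q d k l F G) := by
  classical
  obtain ⟨fF, NF, hfF⟩ := hF.2.2.1
  obtain ⟨fG, NG, hfG⟩ := hG.2.2.1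
  obtain ⟨f, hf⟩ := DM_dvd_T n q d k l fF fG NF NG
  refine ⟨f, NF + NG, ?_⟩
  intro v hv
  have key : (starD n q d k l F G v) * (poleDenom n (fun i => k i + l i) v *
      DeltaR n (fun i => k i + l i) v *
      (∏ i : Fin n, ∏ j : Fin (k i.1 + l i.1), v i.1 j.1) ^ (NF + NG)) =
      eval (vhat v) (Tpoly n q d k l fF fG NF NG) := by
    rw [Tpoly, map_sum]
    unfold starD
    rw [Finset.sum_mul]
    exact Finset.sum_congr rfl fun σ _ =>
      per_sigma n hn q d k l F G fF fG NF NG hfF hfG v hv σ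
  have hΔne : DeltaR n (fun i => k i + l i) v ≠ 0 := DeltaR_ne_zero n _ v hv
  apply mul_right_cancel₀ hΔne
  calc starD n q d k l F G v * poleDenom n (fun i => k i + l i) v *
        (∏ i : Fin n, ∏ j : Fin (k i.1 + l i.1), v i.1 j.1) ^ (NF + NG) *
        DeltaR n (fun i => k i + l i) v
      = (starD n q d k l F G v) * (poleDenom n (fun i => k i + l i) v *
        DeltaR n (fun i => k i + l i) v *
        (∏ i : Fin n, ∏ j : Fin (k i.1 + l i.1), v i.1 j.1) ^ (NF + NG)) := by ring
    _ = eval (vhat v) (Tpoly n q d k l fF fG NF NG) := key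
    _ = eval (vhat v) f * DeltaR n (fun i => k i + l i) v := by
        rw [hf, map_mul, eval_DFpolyR]
        ring



end Stmt0

theorem stmt0 (n : ℕ) (hn : 3 ≤ n) (q d : ℂ) (hq : q ≠ 0) (hd : d ≠ 0)
    (hroot : NoRootsOfUnity q d) (k l : ℕ → ℕ) (F G : Va → ℂ)
    (hF : SK n q d k F) (hG : SK n q d l G) :
    SK n q d (fun i => k i + l i) (starD n q d k l F G) :=
  ⟨Stmt0.dependsOn_starD n q d k l hF.1 hG.1,
   Stmt0.symmIn_starD n q d k l F G,
   Stmt0.poleCond_starD n hn q d k l hF hG,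
   Stmt0.wheelCond_starD n hn q d hq hd k l hF hG⟩
end
end

section
/- For every k ≥ 1 and every l̄ with 0 ≤ l̄ ≤ kδ such that l̄ ∉ {0, δ, 2δ, …, kδ}, the limit lim_{ξ→∞} (F_k)^{l̄}_ξ exists and equals 0. -/
open Filter Topology

noncomputable section

/-! ### Auxiliary material for stmt11 -/

lemma aux_cyc_lt (n i : ℕ) (hn : 1 ≤ n) : cyc n i < n := Nat.mod_lt _ hn

lemma aux_cyc_ne (n i : ℕ) (hn : 2 ≤ n) (hi : i < n) : cyc n i ≠ i := by
  unfold cyc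
  rcases Nat.lt_or_ge (i + 1) n with h | h
  · rw [Nat.mod_eq_of_lt h]; omega
  · have h1 : i + 1 = n := by omega
    rw [h1, Nat.mod_self]; omega

lemma aux_sum_if_lt (k b : ℕ) (hb : b ≤ k) (X Y : ℤ) :
    ∑ j : Fin k, (if (j : ℕ) < b then X else Y) = b * X + ((k : ℤ) - b) * Y := by
  rw [Fin.sum_univ_eq_sum_range (fun j => if j < b then X else Y) k]
  rw [Finset.range_eq_Ico, ← Finset.sum_Ico_consecutive _ (Nat.zero_le b) hb]
  rw [Finset.sum_congr rfl (fun j hj => if_pos (Finset.mem_Ico.mp hj).2),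
      Finset.sum_congr rfl (g := fun _ => Y) (fun j hj => if_neg (by
        have := (Finset.mem_Ico.mp hj).1; omega))]
  rw [Finset.sum_const, Finset.sum_const, Nat.card_Ico, Nat.card_Ico, nsmul_eq_mul, nsmul_eq_mul]
  simp only [Nat.sub_zero]
  push_cast [Nat.cast_sub hb]
  ring

lemma aux_sumD (k a b : ℕ) (ha : a ≤ k) (hb : b ≤ k) :
    ∑ j : Fin k, ∑ j' : Fin k,
      (max (if (j' : ℕ) < a then (1:ℤ) else 0) (if (j : ℕ) < b then 1 else 0))
      = a * k + b * k - a * b := by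
  have inner : ∀ j : Fin k, (∑ j' : Fin k,
      max (if (j' : ℕ) < a then (1:ℤ) else 0) (if (j : ℕ) < b then 1 else 0))
      = if (j : ℕ) < b then (k : ℤ) else a := by
    intro j
    by_cases hj : (j : ℕ) < b
    · simp only [hj, if_true]
      rw [Finset.sum_congr rfl (g := fun _ => (1:ℤ))
        (fun j' _ => by by_cases h : (j' : ℕ) < a <;> simp [h])]
      simp
    · simp only [hj, if_false]
      rw [Finset.sum_congr rfl (g := fun j' : Fin k => if (j' : ℕ) < a then (1:ℤ) else 0)
        (fun j' _ => by by_cases h : (j' : ℕ) < a <;> simp [hj, h])]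
      rw [aux_sum_if_lt k a ha 1 0]; ring
  rw [Finset.sum_congr rfl (fun j _ => inner j), aux_sum_if_lt k b hb (k:ℤ) a]
  ring

lemma aux_sumA (k a : ℕ) (ha : a ≤ k) :
    ∑ j : Fin k, ∑ j' : Fin k,
      (if j = j' then 0 else
        max (if (j : ℕ) < a then (1:ℤ) else 0) (if (j' : ℕ) < a then 1 else 0))
      = 2 * a * k - a * a - a := by
  have inner : ∀ j : Fin k, (∑ j' : Fin k, (if j = j' then 0 else
      max (if (j : ℕ) < a then (1:ℤ) else 0) (if (j' : ℕ) < a then 1 else 0)))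
      = if (j : ℕ) < a then (k : ℤ) - 1 else a := by
    intro j
    by_cases hj : (j : ℕ) < a
    · simp only [hj, if_true]
      rw [Finset.sum_congr rfl (g := fun j' : Fin k => 1 - if j = j' then (1:ℤ) else 0)
        (fun j' _ => by
          by_cases h : j = j' <;> by_cases h' : (j' : ℕ) < a <;> simp [hj, h, h'])]
      rw [Finset.sum_sub_distrib, Finset.sum_ite_eq]
      simp
    · simp only [hj, if_false]
      rw [Finset.sum_congr rfl (g := fun j' : Fin k => if (j' : ℕ) < a then (1:ℤ) else 0)
        (fun j' _ => by
          by_cases h : j = j' <;> by_cases h' : (j' : ℕ) < a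
          · exfalso; apply hj; rw [h]; exact h'
          · simp [h, h']
          · simp [hj, h, h']
          · simp [hj, h, h'])]
      rw [aux_sum_if_lt k a ha 1 0]; ring
  rw [Finset.sum_congr rfl (fun j _ => inner j), aux_sum_if_lt k a ha ((k:ℤ) - 1) a]
  ring

lemma aux_cyc_reindex (n : ℕ) (hn : 1 ≤ n) (f : ℕ → ℤ) :
    ∑ i ∈ Finset.range n, f (cyc n i) = ∑ i ∈ Finset.range n, f i := by
  refine Finset.sum_nbij' (fun i => cyc n i) (fun i => (i + (n-1)) % n) ?_ ?_ ?_ ?_ ?_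
  · intro i _; exact Finset.mem_range.mpr (Nat.mod_lt _ hn)
  · intro i _; exact Finset.mem_range.mpr (Nat.mod_lt _ hn)
  · intro i hi
    have hi' := Finset.mem_range.mp hi
    show (cyc n i + (n-1)) % n = i
    unfold cyc
    rw [Nat.mod_add_mod]
    have h : i + 1 + (n - 1) = i + n := by omega
    rw [h, Nat.add_mod_right, Nat.mod_eq_of_lt hi']
  · intro i hi
    have hi' := Finset.mem_range.mp hi
    show cyc n ((i + (n-1)) % n) = i
    unfold cyc
    rw [Nat.mod_add_mod]
    have h : i + (n - 1) + 1 = i + n := by omega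
    rw [h, Nat.add_mod_right, Nat.mod_eq_of_lt hi']
  · intro i _; rfl

lemma aux_cyc_pos (n : ℕ) (hn : 1 ≤ n) (g : ℕ → ℤ)
    (hne : ∃ i, i < n ∧ g i ≠ g (cyc n i)) :
    0 < ∑ i ∈ Finset.range n, g i * (g i - g (cyc n i)) := by
  have hre : ∑ i ∈ Finset.range n, (g (cyc n i))^2 = ∑ i ∈ Finset.range n, (g i)^2 :=
    aux_cyc_reindex n hn (fun i => (g i)^2)
  have h2 : ∑ i ∈ Finset.range n, (g i - g (cyc n i))^2 + ∑ i ∈ Finset.range n, (g i)^2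
      = ∑ i ∈ Finset.range n, 2 * (g i * (g i - g (cyc n i)))
        + ∑ i ∈ Finset.range n, (g (cyc n i))^2 := by
    rw [← Finset.sum_add_distrib, ← Finset.sum_add_distrib]
    exact Finset.sum_congr rfl fun i _ => by ring
  have hmul : ∑ i ∈ Finset.range n, 2 * (g i * (g i - g (cyc n i)))
      = 2 * ∑ i ∈ Finset.range n, g i * (g i - g (cyc n i)) := by
    rw [Finset.mul_sum]
  obtain ⟨i0, hi0, hgi0⟩ := hne
  have hpos : 0 < ∑ i ∈ Finset.range n, (g i - g (cyc n i))^2 := by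
    refine Finset.sum_pos' (fun i _ => sq_nonneg _) ⟨i0, Finset.mem_range.mpr hi0, ?_⟩
    have h := sub_ne_zero.mpr hgi0
    exact lt_of_le_of_ne (sq_nonneg _) (Ne.symm (pow_ne_zero 2 h))
  linarith

/-- indicator exponent for scaling -/
def eps (l : ℕ → ℕ) (i j : ℕ) : ℕ := if j < l i then 1 else 0

lemma eps_cases (l : ℕ → ℕ) (i j : ℕ) : eps l i j = 0 ∨ eps l i j = 1 := by
  unfold eps; split <;> simp

def DnE (n k : ℕ) (l : ℕ → ℕ) : ℕ :=
  ∑ i : Fin n, ∑ j : Fin k, ∑ j' : Fin k,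
    if j = j' then 0 else max (eps l i.1 j.1) (eps l i.1 j'.1)

def LnE (n k : ℕ) (l : ℕ → ℕ) : ℕ :=
  ∑ i : Fin n, ∑ j : Fin k, eps l i.1 j.1

def DdE (n k : ℕ) (l : ℕ → ℕ) : ℕ :=
  ∑ i : Fin n, ∑ j : Fin k, ∑ j' : Fin k,
    max (eps l (cyc n i.1) j'.1) (eps l i.1 j.1)

lemma aux_exp_ineq (n k : ℕ) (hn : 2 ≤ n) (l : ℕ → ℕ) (hl : ∀ i, i < n → l i ≤ k)
    (hnc : ¬∃ m : ℕ, ∀ i, i < n → l i = m) :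
    DnE n k l + LnE n k l < DdE n k l := by
  have hn1 : 1 ≤ n := by omega
  have hN : (DnE n k l : ℤ) = ∑ i ∈ Finset.range n,
      (2 * (l i : ℤ) * k - l i * l i - l i) := by
    rw [DnE]
    push_cast [eps, apply_ite (fun x : ℕ => (x : ℤ))]
    rw [Fin.sum_univ_eq_sum_range (fun i => ∑ j : Fin k, ∑ j' : Fin k,
      if j = j' then 0 else
        max (if (j:ℕ) < l i then (1:ℤ) else 0) (if (j':ℕ) < l i then 1 else 0)) n]
    exact Finset.sum_congr rfl fun i hi => aux_sumA k (l i) (hl i (Finset.mem_range.mp hi))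
  have hL : (LnE n k l : ℤ) = ∑ i ∈ Finset.range n, (l i : ℤ) := by
    rw [LnE]
    push_cast [eps, apply_ite (fun x : ℕ => (x : ℤ))]
    rw [Fin.sum_univ_eq_sum_range (fun i => ∑ j : Fin k,
      if (j:ℕ) < l i then (1:ℤ) else 0) n]
    refine Finset.sum_congr rfl fun i hi => ?_
    rw [aux_sum_if_lt k (l i) (hl i (Finset.mem_range.mp hi)) 1 0]; ring
  have hD : (DdE n k l : ℤ) = ∑ i ∈ Finset.range n,
      ((l (cyc n i) : ℤ) * k + l i * k - l (cyc n i) * l i) := by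
    rw [DdE]
    push_cast [eps, apply_ite (fun x : ℕ => (x : ℤ))]
    rw [Fin.sum_univ_eq_sum_range (fun i => ∑ j : Fin k, ∑ j' : Fin k,
      max (if (j':ℕ) < l (cyc n i) then (1:ℤ) else 0) (if (j:ℕ) < l i then 1 else 0)) n]
    exact Finset.sum_congr rfl fun i hi =>
      aux_sumD k (l (cyc n i)) (l i) (hl _ (Nat.mod_lt _ hn1)) (hl i (Finset.mem_range.mp hi))
  have hne : ∃ i, i < n ∧ ((k : ℤ) - l i) ≠ ((k : ℤ) - l (cyc n i)) := by
    by_contra hcon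
    push_neg at hcon
    apply hnc
    refine ⟨l 0, ?_⟩
    intro i hi
    induction i with
    | zero => rfl
    | succ j ih =>
      have hj : j < n := by omega
      have h1 := hcon j hj
      have hlj : l j = l (cyc n j) := by omega
      have h2 : cyc n j = j + 1 := by unfold cyc; exact Nat.mod_eq_of_lt hi
      rw [← h2, ← hlj]
      exact ih hj
  have hpos := aux_cyc_pos n hn1 (fun i => (k : ℤ) - l i) hne
  have key : (DdE n k l : ℤ) - (DnE n k l + LnE n k l) =
      ∑ i ∈ Finset.range n, ((k : ℤ) - l i) * (((k : ℤ) - l i) - ((k : ℤ) - l (cyc n i))) := by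
    rw [hD, hN, hL, ← Finset.sum_add_distrib, ← Finset.sum_sub_distrib]
    exact Finset.sum_congr rfl fun i _ => by ring
  have hpos' : 0 < ∑ i ∈ Finset.range n,
      ((k : ℤ) - l i) * (((k : ℤ) - l i) - ((k : ℤ) - l (cyc n i))) := by
    simpa using hpos
  have hfin : (DnE n k l : ℤ) + LnE n k l < DdE n k l := by linarith
  exact_mod_cast hfin

lemma aux_scale_eq (n : ℕ) (l : ℕ → ℕ) (ξ : ℂ) (v : Va) (i j : ℕ) (hi : i < n) :
    scaleVar n l ξ v i j = ξ ^ eps l i j * v i j := by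
  unfold scaleVar eps
  by_cases h : j < l i
  · simp [hi, h]
  · simp [h]

lemma aux_factor_split (ξ : ℂ) (hξ : ξ ≠ 0) (X Y : ℂ) (a b : ℕ) :
    X * ξ ^ a - Y * ξ ^ b =
      ξ ^ max a b * (X * ξ⁻¹ ^ (max a b - a) - Y * ξ⁻¹ ^ (max a b - b)) := by
  have h : ∀ c, c ≤ max a b → ξ ^ max a b * ξ⁻¹ ^ (max a b - c) = ξ ^ c := by
    intro c hc
    rw [inv_pow, ← pow_sub₀ ξ hξ (Nat.sub_le _ _), Nat.sub_sub_self hc]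
  calc X * ξ ^ a - Y * ξ ^ b
      = X * (ξ ^ max a b * ξ⁻¹ ^ (max a b - a)) - Y * (ξ ^ max a b * ξ⁻¹ ^ (max a b - b)) := by
        rw [h a (le_max_left a b), h b (le_max_right a b)]
    _ = _ := by ring

lemma aux_split1 {ι : Type*} (s : Finset ι) (ξ : ℂ) (a : ι → ℕ) (f : ι → ℂ) :
    ∏ t ∈ s, ξ ^ a t * f t = ξ ^ (∑ t ∈ s, a t) * ∏ t ∈ s, f t := by
  rw [Finset.prod_mul_distrib, Finset.prod_pow_eq_pow_sum]

lemma aux_split2 (n k : ℕ) (ξ : ℂ) (a : Fin n → Fin k → ℕ) (f : Fin n → Fin k → ℂ) :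
    ∏ i : Fin n, ∏ j : Fin k, ξ ^ a i j * f i j
      = ξ ^ (∑ i : Fin n, ∑ j : Fin k, a i j) * ∏ i : Fin n, ∏ j : Fin k, f i j := by
  simp only [aux_split1]

lemma aux_split3 (n k : ℕ) (ξ : ℂ) (a : Fin n → Fin k → Fin k → ℕ)
    (f : Fin n → Fin k → Fin k → ℂ) :
    ∏ i : Fin n, ∏ j : Fin k, ∏ j' : Fin k, ξ ^ a i j j' * f i j j'
      = ξ ^ (∑ i : Fin n, ∑ j : Fin k, ∑ j' : Fin k, a i j j') *
        ∏ i : Fin n, ∏ j : Fin k, ∏ j' : Fin k, f i j j' := by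
  simp only [aux_split1]

def NfD (n : ℕ) (q : ℂ) (k : ℕ) (l : ℕ → ℕ) (v : Va) (η : ℂ) : ℂ :=
  ∏ i : Fin n, ∏ j : Fin k, ∏ j' : Fin k,
    if j = j' then 1
    else q⁻¹ * v i.1 j.1 * η ^ (max (eps l i.1 j.1) (eps l i.1 j'.1) - eps l i.1 j.1) -
      q * v i.1 j'.1 * η ^ (max (eps l i.1 j.1) (eps l i.1 j'.1) - eps l i.1 j'.1)

def DfD (n k : ℕ) (l : ℕ → ℕ) (v : Va) (η : ℂ) : ℂ :=
  ∏ i : Fin n, ∏ j : Fin k, ∏ j' : Fin k,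
    (v (cyc n i.1) j'.1 *
        η ^ (max (eps l (cyc n i.1) j'.1) (eps l i.1 j.1) - eps l (cyc n i.1) j'.1) -
      v i.1 j.1 * η ^ (max (eps l (cyc n i.1) j'.1) (eps l i.1 j.1) - eps l i.1 j.1))

def PvD (n k : ℕ) (v : Va) : ℂ := ∏ i : Fin n, ∏ j : Fin k, v i.1 j.1

lemma aux_fk_eq (n k : ℕ) (hn : 1 ≤ n) (q : ℂ) (l : ℕ → ℕ) (v : Va) (ξ : ℂ) (hξ : ξ ≠ 0) :
    Fk n q k (scaleVar n l ξ v) =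
      (ξ ^ DnE n k l * NfD n q k l v ξ⁻¹ * (ξ ^ LnE n k l * PvD n k v)) /
        (ξ ^ DdE n k l * DfD n k l v ξ⁻¹) := by
  have hA : (∏ i : Fin n, ∏ j : Fin k, ∏ j' : Fin k,
      if j = j' then 1 else q⁻¹ * scaleVar n l ξ v i.1 j.1 - q * scaleVar n l ξ v i.1 j'.1)
      = ξ ^ DnE n k l * NfD n q k l v ξ⁻¹ := by
    rw [show (∏ i : Fin n, ∏ j : Fin k, ∏ j' : Fin k,
        if j = j' then 1 else q⁻¹ * scaleVar n l ξ v i.1 j.1 - q * scaleVar n l ξ v i.1 j'.1)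
        = ∏ i : Fin n, ∏ j : Fin k, ∏ j' : Fin k,
          ξ ^ (if j = j' then 0 else max (eps l i.1 j.1) (eps l i.1 j'.1)) *
          (if j = j' then 1
            else q⁻¹ * v i.1 j.1 * ξ⁻¹ ^ (max (eps l i.1 j.1) (eps l i.1 j'.1) - eps l i.1 j.1) -
              q * v i.1 j'.1 * ξ⁻¹ ^ (max (eps l i.1 j.1) (eps l i.1 j'.1) - eps l i.1 j'.1))
        from ?_, aux_split3]
    · rfl
    · refine Finset.prod_congr rfl fun i _ => Finset.prod_congr rfl fun j _ =>
        Finset.prod_congr rfl fun j' _ => ?_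
      by_cases hjj : j = j'
      · simp [hjj]
      · simp only [if_neg hjj]
        rw [aux_scale_eq n l ξ v i.1 j.1 i.2, aux_scale_eq n l ξ v i.1 j'.1 i.2]
        rw [show q⁻¹ * (ξ ^ eps l i.1 j.1 * v i.1 j.1) - q * (ξ ^ eps l i.1 j'.1 * v i.1 j'.1)
          = (q⁻¹ * v i.1 j.1) * ξ ^ eps l i.1 j.1 - (q * v i.1 j'.1) * ξ ^ eps l i.1 j'.1 from by
            ring]
        rw [aux_factor_split ξ hξ]
  have hB : (∏ i : Fin n, ∏ j : Fin k, scaleVar n l ξ v i.1 j.1)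
      = ξ ^ LnE n k l * PvD n k v := by
    rw [show (∏ i : Fin n, ∏ j : Fin k, scaleVar n l ξ v i.1 j.1)
        = ∏ i : Fin n, ∏ j : Fin k, ξ ^ eps l i.1 j.1 * v i.1 j.1 from
        Finset.prod_congr rfl fun i _ => Finset.prod_congr rfl fun j _ =>
          aux_scale_eq n l ξ v i.1 j.1 i.2,
      aux_split2]
    rfl
  have hC : (∏ i : Fin n, ∏ j : Fin k, ∏ j' : Fin k,
      (scaleVar n l ξ v (cyc n i.1) j'.1 - scaleVar n l ξ v i.1 j.1))
      = ξ ^ DdE n k l * DfD n k l v ξ⁻¹ := by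
    rw [show (∏ i : Fin n, ∏ j : Fin k, ∏ j' : Fin k,
        (scaleVar n l ξ v (cyc n i.1) j'.1 - scaleVar n l ξ v i.1 j.1))
        = ∏ i : Fin n, ∏ j : Fin k, ∏ j' : Fin k,
          ξ ^ (max (eps l (cyc n i.1) j'.1) (eps l i.1 j.1)) *
          (v (cyc n i.1) j'.1 *
              ξ⁻¹ ^ (max (eps l (cyc n i.1) j'.1) (eps l i.1 j.1) - eps l (cyc n i.1) j'.1) -
            v i.1 j.1 * ξ⁻¹ ^ (max (eps l (cyc n i.1) j'.1) (eps l i.1 j.1) - eps l i.1 j.1))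
        from ?_, aux_split3]
    · rfl
    · refine Finset.prod_congr rfl fun i _ => Finset.prod_congr rfl fun j _ =>
        Finset.prod_congr rfl fun j' _ => ?_
      rw [aux_scale_eq n l ξ v (cyc n i.1) j'.1 (Nat.mod_lt _ hn),
        aux_scale_eq n l ξ v i.1 j.1 i.2]
      rw [show ξ ^ eps l (cyc n i.1) j'.1 * v (cyc n i.1) j'.1 - ξ ^ eps l i.1 j.1 * v i.1 j.1
        = v (cyc n i.1) j'.1 * ξ ^ eps l (cyc n i.1) j'.1 - v i.1 j.1 * ξ ^ eps l i.1 j.1 from by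
          ring]
      rw [aux_factor_split ξ hξ]
  show (_ * _) / _ = _
  rw [hA, hB, hC]

lemma aux_NfD_cont (n : ℕ) (q : ℂ) (k : ℕ) (l : ℕ → ℕ) (v : Va) :
    Continuous (NfD n q k l v) := by
  unfold NfD
  refine continuous_finset_prod _ fun i _ => continuous_finset_prod _ fun j _ =>
    continuous_finset_prod _ fun j' _ => ?_
  by_cases h : j = j'
  · simp only [if_pos h]; exact continuous_const
  · simp only [if_neg h]; fun_prop

lemma aux_DfD_cont (n k : ℕ) (l : ℕ → ℕ) (v : Va) :
    Continuous (DfD n k l v) := by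
  unfold DfD
  refine continuous_finset_prod _ fun i _ => continuous_finset_prod _ fun j _ =>
    continuous_finset_prod _ fun j' _ => ?_
  fun_prop

lemma aux_DfD_ne (n k : ℕ) (hn : 2 ≤ n) (l : ℕ → ℕ) (v : Va)
    (hv : v ∈ Dom n (fun _ => k)) : DfD n k l v 0 ≠ 0 := by
  unfold DfD
  rw [Finset.prod_ne_zero_iff]
  intro i _
  rw [Finset.prod_ne_zero_iff]
  intro j _
  rw [Finset.prod_ne_zero_iff]
  intro j' _
  have hn1 : 1 ≤ n := by omega
  have hc : cyc n i.1 < n := Nat.mod_lt _ hn1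
  have hne : cyc n i.1 ≠ i.1 := aux_cyc_ne n i.1 hn i.2
  have h1 : v (cyc n i.1) j'.1 ≠ 0 := hv.1 _ hc j'.1 j'.2
  have h2 : v i.1 j.1 ≠ 0 := hv.1 _ i.2 j.1 j.2
  have h3 : v (cyc n i.1) j'.1 ≠ v i.1 j.1 :=
    hv.2 _ _ _ _ hc i.2 j'.2 j.2 (by simp [hne])
  rcases eps_cases l (cyc n i.1) j'.1 with he' | he' <;>
    rcases eps_cases l i.1 j.1 with he | he <;>
    simp only [he, he'] <;> norm_num
  · exact sub_ne_zero.mpr h3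
  · exact h2
  · exact h1
  · exact sub_ne_zero.mpr h3


theorem stmt11 (n : ℕ) (hn : 3 ≤ n) (q d : ℂ) (hq : q ≠ 0) (hd : d ≠ 0)
    (hroot : NoRootsOfUnity q d) (k : ℕ) (hk : 1 ≤ k) (l : ℕ → ℕ)
    (hl : ∀ i, i < n → l i ≤ k) (hnc : ¬∃ m : ℕ, ∀ i, i < n → l i = m) :
    ∀ v ∈ Dom n (fun _ => k), limInfty n l (Fk n q k) v 0 := by
  intro v hv
  have hn1 : 1 ≤ n := by omega
  have hn2 : 2 ≤ n := by omega
  have hlt := aux_exp_ineq n k hn2 l hl hnc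
  set m := DdE n k l - (DnE n k l + LnE n k l) with hmdef
  have hm1 : 1 ≤ m := by omega
  have hsum : DnE n k l + LnE n k l + m = DdE n k l := by omega
  set g : ℂ → ℂ := fun η => η ^ m * (NfD n q k l v η * PvD n k v / DfD n k l v η) with hgdef
  have hg : ContinuousAt g 0 := by
    apply ContinuousAt.mul ((continuous_pow m).continuousAt)
    exact ContinuousAt.div (((aux_NfD_cont n q k l v).continuousAt).mul continuousAt_const)
      ((aux_DfD_cont n k l v).continuousAt) (aux_DfD_ne n k hn2 l v hv)
  have hg0 : g 0 = 0 := by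
    simp [hgdef, zero_pow (by omega : m ≠ 0)]
  have hcomp : Tendsto (fun ξ : ℂ => g ξ⁻¹) (Bornology.cobounded ℂ) (𝓝 0) := by
    have := (hg.tendsto).comp tendsto_inv₀_cobounded
    rw [hg0] at this
    exact this
  unfold limInfty
  refine hcomp.congr' ?_
  filter_upwards [Bornology.eventually_ne_cobounded (0 : ℂ)] with ξ hξ
  rw [aux_fk_eq n k hn1 q l v ξ hξ, ← hsum, pow_add, pow_add]
  simp only [hgdef]
  rw [show ξ ^ DnE n k l * NfD n q k l v ξ⁻¹ * (ξ ^ LnE n k l * PvD n k v)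
      = (ξ ^ DnE n k l * ξ ^ LnE n k l) * (NfD n q k l v ξ⁻¹ * PvD n k v) from by ring,
    show ξ ^ DnE n k l * ξ ^ LnE n k l * ξ ^ m * DfD n k l v ξ⁻¹
      = (ξ ^ DnE n k l * ξ ^ LnE n k l) * (ξ ^ m * DfD n k l v ξ⁻¹) from by ring,
    mul_div_mul_left _ _ (mul_ne_zero (pow_ne_zero _ hξ) (pow_ne_zero _ hξ)),
    div_mul_eq_div_div_swap, div_eq_mul_inv _ (ξ ^ m), ← inv_pow, mul_comm]
end
end

section
/- For every k ≥ 1 and every 0 ≤ l ≤ k, the limit lim_{ξ→∞} (F_k)^{lδ}_ξ exists and equals F_l · F_{k−l}, where F_l is taken in the variables {x_{i,j} : i ∈ [n], 1 ≤ j ≤ l}, F_{k−l} is taken in the variables {x_{i,j} : i ∈ [n], l < j ≤ k}, and the product is the ordinary product of rational functions. -/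
open Filter Topology

noncomputable section

namespace S12

def nfac (q : ℂ) (l : ℕ) (v : Va) (i : ℕ) (t : ℂ) (j j' : ℕ) : ℂ :=
  if j = j' then 1 else
    (if j < l ∨ ¬ j' < l then 1 else t) * (q⁻¹ * v i j) -
    (if j' < l ∨ ¬ j < l then 1 else t) * (q * v i j')

def dfac (n : ℕ) (l : ℕ) (v : Va) (i : ℕ) (t : ℂ) (j j' : ℕ) : ℂ :=
  (if j' < l ∨ ¬ j < l then 1 else t) * v (cyc n i) j' -
  (if j < l ∨ ¬ j' < l then 1 else t) * v i j

def eN (l j j' : ℕ) : ℕ := if j ≠ j' ∧ (j < l ∨ j' < l) then 1 else 0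
def eD (l j j' : ℕ) : ℕ := if j < l ∨ j' < l then 1 else 0
def eB (l j : ℕ) : ℕ := if j < l then 1 else 0

lemma nfac_fact (q : ℂ) (l : ℕ) (v : Va) (i : ℕ) (ξ : ℂ) (hξ : ξ ≠ 0) (j j' : ℕ) :
    (if j = j' then (1:ℂ) else
      q⁻¹ * (if j < l then ξ * v i j else v i j) - q * (if j' < l then ξ * v i j' else v i j'))
      = ξ ^ eN l j j' * nfac q l v i ξ⁻¹ j j' := by
  unfold nfac eN
  by_cases h1 : j = j' <;> by_cases h2 : j < l <;> by_cases h3 : j' < l <;>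
    simp only [h1, h2, h3, if_true, if_false, not_true, not_false_iff, or_true, true_or,
      or_false, false_or, ne_eq, true_and, false_and, and_true, and_false, pow_one,
      pow_zero, one_mul, not_lt, ite_true, ite_false] <;>
    first
      | ring1
      | linear_combination (q * v i j') * mul_inv_cancel₀ hξ
      | linear_combination (-(q⁻¹ * v i j)) * mul_inv_cancel₀ hξ

lemma dfac_fact (n : ℕ) (l : ℕ) (v : Va) (i : ℕ) (ξ : ℂ) (hξ : ξ ≠ 0) (j j' : ℕ) :
    ((if j' < l then ξ * v (cyc n i) j' else v (cyc n i) j') -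
      (if j < l then ξ * v i j else v i j))
      = ξ ^ eD l j j' * dfac n l v i ξ⁻¹ j j' := by
  unfold dfac eD
  by_cases h2 : j < l <;> by_cases h3 : j' < l <;>
    simp only [h2, h3, if_true, if_false, or_true, true_or, or_false, false_or, not_true,
      not_false_iff, pow_one, pow_zero, one_mul, ite_true, ite_false] <;>
    first
      | ring1
      | linear_combination (-(v (cyc n i) j')) * mul_inv_cancel₀ hξ
      | linear_combination (v i j) * mul_inv_cancel₀ hξ

lemma bfac_fact (l : ℕ) (v : Va) (i : ℕ) (ξ : ℂ) (j : ℕ) :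
    (if j < l then ξ * v i j else v i j) = ξ ^ eB l j * v i j := by
  unfold eB; split_ifs <;> simp

lemma sum_exp (l L : ℕ) :
    ((∑ j : Fin L, ∑ j' : Fin L, eN l j.1 j'.1) + ∑ j : Fin L, eB l j.1)
      = ∑ j : Fin L, ∑ j' : Fin L, eD l j.1 j'.1 := by
  rw [← Finset.sum_add_distrib]
  refine Finset.sum_congr rfl fun j _ => ?_
  have h : ∀ j' : Fin L, eD l j.1 j'.1
      = eN l j.1 j'.1 + (if j = j' ∧ j.1 < l then 1 else 0) := by
    intro j'
    have hjj : (j = j') ↔ (j.1 = j'.1) := by rw [Fin.val_inj]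
    unfold eN eD
    simp only [hjj]
    split_ifs <;> omega
  rw [Finset.sum_congr rfl fun j' _ => h j', Finset.sum_add_distrib]
  congr 1
  by_cases hj : j.1 < l
  · simp [hj, eB, Finset.sum_ite_eq]
  · simp [hj, eB]

lemma fk_eq (n : ℕ) (hn : 0 < n) (q : ℂ) (l K : ℕ) (v : Va) (ξ : ℂ) (hξ : ξ ≠ 0) :
    Fk n q K (scaleVar n (fun _ => l) ξ v)
      = ((∏ i : Fin n, ∏ j : Fin K, ∏ j' : Fin K, nfac q l v i.1 ξ⁻¹ j.1 j'.1) *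
          ∏ i : Fin n, ∏ j : Fin K, v i.1 j.1) /
        ∏ i : Fin n, ∏ j : Fin K, ∏ j' : Fin K, dfac n l v i.1 ξ⁻¹ j.1 j'.1 := by
  have hcyc : ∀ i : ℕ, cyc n i < n := fun i => Nat.mod_lt _ (by omega)
  have hw : ∀ (i j : ℕ), i < n →
      scaleVar n (fun _ => l) ξ v i j = if j < l then ξ * v i j else v i j := by
    intro i j hi; simp [scaleVar, hi]
  have hnf := fun (i j j' : ℕ) => nfac_fact q l v i ξ hξ j j'
  have hdf := fun (i j j' : ℕ) => dfac_fact n l v i ξ hξ j j'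
  have hbf := fun (i j : ℕ) => bfac_fact l v i ξ j
  unfold Fk
  simp only [Fin.ext_iff]
  rw [show (∏ i : Fin n, ∏ j : Fin K, ∏ j' : Fin K,
      if (j:ℕ) = (j':ℕ) then (1:ℂ) else
        q⁻¹ * scaleVar n (fun _ => l) ξ v i.1 j.1 - q * scaleVar n (fun _ => l) ξ v i.1 j'.1)
      = ∏ i : Fin n, ∏ j : Fin K, ∏ j' : Fin K,
          ξ ^ eN l j.1 j'.1 * nfac q l v i.1 ξ⁻¹ j.1 j'.1 from
    Finset.prod_congr rfl fun i _ => Finset.prod_congr rfl fun j _ =>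
      Finset.prod_congr rfl fun j' _ => by
        rw [hw _ _ i.isLt, hw _ _ i.isLt]; exact hnf i.1 j.1 j'.1]
  rw [show (∏ i : Fin n, ∏ j : Fin K, scaleVar n (fun _ => l) ξ v i.1 j.1)
      = ∏ i : Fin n, ∏ j : Fin K, ξ ^ eB l j.1 * v i.1 j.1 from
    Finset.prod_congr rfl fun i _ => Finset.prod_congr rfl fun j _ => by
      rw [hw _ _ i.isLt]; exact hbf i.1 j.1]
  rw [show (∏ i : Fin n, ∏ j : Fin K, ∏ j' : Fin K,
      (scaleVar n (fun _ => l) ξ v (cyc n i.1) j'.1 - scaleVar n (fun _ => l) ξ v i.1 j.1))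
      = ∏ i : Fin n, ∏ j : Fin K, ∏ j' : Fin K,
          ξ ^ eD l j.1 j'.1 * dfac n l v i.1 ξ⁻¹ j.1 j'.1 from
    Finset.prod_congr rfl fun i _ => Finset.prod_congr rfl fun j _ =>
      Finset.prod_congr rfl fun j' _ => by
        rw [hw _ _ (hcyc i.1), hw _ _ i.isLt]; exact hdf i.1 j.1 j'.1]
  simp only [Finset.prod_mul_distrib, Finset.prod_pow_eq_pow_sum, Finset.prod_const,
    Finset.card_univ, Fintype.card_fin]
  rw [mul_mul_mul_comm, ← pow_add, show ((∑ i : Fin n, ∑ j : Fin K, ∑ j' : Fin K, eN l j.1 j'.1)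
        + ∑ i : Fin n, ∑ j : Fin K, eB l j.1)
      = ∑ i : Fin n, ∑ j : Fin K, ∑ j' : Fin K, eD l j.1 j'.1 from by
    rw [← Finset.sum_add_distrib]; exact Finset.sum_congr rfl fun i _ => sum_exp l K]
  exact mul_div_mul_left _ _ (pow_ne_zero _ hξ)

lemma prod_cyc (n : ℕ) (hn : 0 < n) (f : ℕ → ℂ) :
    ∏ i : Fin n, f (cyc n i.1) = ∏ i : Fin n, f i.1 := by
  haveI : NeZero n := ⟨by omega⟩
  have h : ∀ i : Fin n, cyc n i.1 = ((i + 1 : Fin n) : ℕ) := by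
    intro i
    rw [Fin.add_def, Fin.val_one']
    unfold cyc
    rw [Nat.add_mod ↑i 1 n, Nat.mod_eq_of_lt i.isLt]
  rw [Finset.prod_congr rfl fun i (_ : i ∈ Finset.univ) => congrArg f (h i)]
  exact Fintype.prod_equiv (Equiv.addRight (1 : Fin n))
    (fun i : Fin n => f ((i + 1 : Fin n) : ℕ)) (fun i : Fin n => f i.1) (fun i => rfl)

lemma value0 (n : ℕ) (hn : 3 ≤ n) (q : ℂ) (hq : q ≠ 0) (l m : ℕ) (v : Va)
    (hv : v ∈ Dom n (fun _ => l + m)) :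
    ((∏ i : Fin n, ∏ j : Fin (l+m), ∏ j' : Fin (l+m), nfac q l v i.1 0 j.1 j'.1) *
        ∏ i : Fin n, ∏ j : Fin (l+m), v i.1 j.1) /
      (∏ i : Fin n, ∏ j : Fin (l+m), ∏ j' : Fin (l+m), dfac n l v i.1 0 j.1 j'.1)
    = Fk n q l v * Fk n q m (fun i j => v i (j + l)) := by
  obtain ⟨hv1'', hv2''⟩ := hv
  have hv1 : ∀ i, i < n → ∀ j, j < l + m → v i j ≠ 0 := hv1''
  have hv2 : ∀ i i' j j', i < n → i' < n → j < l + m → j' < l + m →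
      (i, j) ≠ (i', j') → v i j ≠ v i' j' := hv2''

  have hcyc : ∀ i : ℕ, cyc n i < n := fun i => Nat.mod_lt _ (by omega)
  have hLL : ∀ (i : ℕ) (j j' : Fin l), nfac q l v i 0 j.1 j'.1
      = if j = j' then 1 else q⁻¹ * v i j.1 - q * v i j'.1 := by
    intro i j j'
    unfold nfac
    rw [if_pos (Or.inl j.isLt), if_pos (Or.inl j'.isLt)]
    simp only [one_mul, Fin.val_inj]
  have hLR : ∀ (i : ℕ) (j : Fin l) (b : Fin m), nfac q l v i 0 j.1 (l + b.1)
      = q⁻¹ * v i j.1 := by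
    intro i j b
    unfold nfac
    rw [if_neg (by have := j.isLt; omega), if_pos (Or.inl j.isLt),
      if_neg (by have := j.isLt; omega)]
    ring
  have hRL : ∀ (i : ℕ) (a : Fin m) (j' : Fin l), nfac q l v i 0 (l + a.1) j'.1
      = -(q * v i j'.1) := by
    intro i a j'
    unfold nfac
    rw [if_neg (by have := j'.isLt; omega), if_neg (by have := j'.isLt; omega),
      if_pos (Or.inl j'.isLt)]
    ring
  have hRR : ∀ (i : ℕ) (a b : Fin m), nfac q l v i 0 (l + a.1) (l + b.1)
      = if a = b then 1 else q⁻¹ * v i (a.1 + l) - q * v i (b.1 + l) := by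
    intro i a b
    unfold nfac
    rw [if_pos (by omega : l + a.1 < l ∨ ¬ l + b.1 < l),
      if_pos (by omega : l + b.1 < l ∨ ¬ l + a.1 < l)]
    simp only [show (l + (a:ℕ) = l + (b:ℕ)) ↔ a = b from
      ⟨fun h => Fin.ext (by omega), fun h => by rw [h]⟩, one_mul]
    rw [Nat.add_comm l a.1, Nat.add_comm l b.1]
  have kLL : ∀ (i : ℕ) (j j' : Fin l), dfac n l v i 0 j.1 j'.1
      = v (cyc n i) j'.1 - v i j.1 := by
    intro i j j'
    unfold dfac
    rw [if_pos (Or.inl j'.isLt), if_pos (Or.inl j.isLt)]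
    ring
  have kLR : ∀ (i : ℕ) (j : Fin l) (b : Fin m), dfac n l v i 0 j.1 (l + b.1)
      = -(v i j.1) := by
    intro i j b
    unfold dfac
    rw [if_neg (by have := j.isLt; omega), if_pos (Or.inl j.isLt)]
    ring
  have kRL : ∀ (i : ℕ) (a : Fin m) (j' : Fin l), dfac n l v i 0 (l + a.1) j'.1
      = v (cyc n i) j'.1 := by
    intro i a j'
    unfold dfac
    rw [if_pos (Or.inl j'.isLt), if_neg (by have := j'.isLt; omega)]
    ring
  have kRR : ∀ (i : ℕ) (a b : Fin m), dfac n l v i 0 (l + a.1) (l + b.1)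
      = v (cyc n i) (b.1 + l) - v i (a.1 + l) := by
    intro i a b
    unfold dfac
    rw [if_pos (by omega), if_pos (by omega), Nat.add_comm l a.1, Nat.add_comm l b.1]
    ring
  have hB2 : ∀ (i : ℕ) (b : Fin m), v i (l + b.1) = v i (b.1 + l) :=
    fun i b => by rw [Nat.add_comm]
  unfold Fk
  simp only [Fin.prod_univ_add, Fin.coe_castAdd, Fin.coe_natAdd]
  simp only [hLL, hLR, hRL, hRR, kLL, kLR, kRL, kRR, hB2]
  simp only [Finset.prod_mul_distrib]
  have hnecyc : ∀ i, i < n → cyc n i ≠ i := by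
    intro i hi
    unfold cyc
    rcases Nat.lt_or_ge (i + 1) n with h | h
    · rw [Nat.mod_eq_of_lt h]; omega
    · have hieq : i + 1 = n := by omega
      rw [hieq, Nat.mod_self]; omega
  have hT1 : (∏ x : Fin n, ∏ x1 : Fin l, ∏ x2 : Fin m, (q⁻¹ : ℂ)) *
      (∏ x : Fin n, ∏ x1 : Fin l, ∏ x2 : Fin m, v ↑x ↑x1) *
      (∏ x : Fin n, ∏ x1 : Fin m, ∏ x2 : Fin l, -(q * v ↑x ↑x2))
      = (∏ x : Fin n, ∏ x1 : Fin l, ∏ x2 : Fin m, -v ↑x ↑x1) *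
        (∏ x : Fin n, ∏ x1 : Fin m, ∏ x2 : Fin l, v (cyc n ↑x) ↑x2) := by
    rw [show (∏ x : Fin n, ∏ x1 : Fin m, ∏ x2 : Fin l, -(q * v ↑x ↑x2))
          = ∏ x : Fin n, ∏ x1 : Fin l, ∏ x2 : Fin m, -(q * v ↑x ↑x1) from
        Finset.prod_congr rfl fun x _ => Finset.prod_comm,
      show (∏ x : Fin n, ∏ x1 : Fin m, ∏ x2 : Fin l, v (cyc n ↑x) ↑x2)
          = ∏ x : Fin n, ∏ x1 : Fin l, ∏ x2 : Fin m, v ↑x ↑x1 from by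
        rw [prod_cyc n (by omega) (fun i0 => ∏ x1 : Fin m, ∏ x2 : Fin l, v i0 ↑x2)]
        exact Finset.prod_congr rfl fun x _ => Finset.prod_comm]
    simp only [← Finset.prod_mul_distrib]
    refine Finset.prod_congr rfl fun x _ => Finset.prod_congr rfl fun x1 _ =>
      Finset.prod_congr rfl fun x2 _ => ?_
    linear_combination (-(v ↑x ↑x1 * v ↑x ↑x1)) * inv_mul_cancel₀ hq
  have hD1 : (∏ x : Fin n, ∏ x1 : Fin l, ∏ x2 : Fin l, (v (cyc n ↑x) ↑x2 - v ↑x ↑x1)) ≠ 0 := by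
    refine Finset.prod_ne_zero_iff.mpr fun x _ => Finset.prod_ne_zero_iff.mpr fun x1 _ =>
      Finset.prod_ne_zero_iff.mpr fun x2 _ => ?_
    exact sub_ne_zero_of_ne (hv2 _ _ _ _ (hcyc _) x.isLt
      (by have := x2.isLt; omega) (by have := x1.isLt; omega)
      (fun h => hnecyc ↑x x.isLt (congrArg Prod.fst h)))
  have hD2 : (∏ x : Fin n, ∏ x1 : Fin m, ∏ x2 : Fin m,
      (v (cyc n ↑x) (↑x2 + l) - v ↑x (↑x1 + l))) ≠ 0 := by
    refine Finset.prod_ne_zero_iff.mpr fun x _ => Finset.prod_ne_zero_iff.mpr fun x1 _ =>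
      Finset.prod_ne_zero_iff.mpr fun x2 _ => ?_
    exact sub_ne_zero_of_ne (hv2 _ _ _ _ (hcyc _) x.isLt
      (by have := x2.isLt; omega) (by have := x1.isLt; omega)
      (fun h => hnecyc ↑x x.isLt (congrArg Prod.fst h)))
  have hE1 : (∏ x : Fin n, ∏ x1 : Fin l, ∏ x2 : Fin m, -v ↑x ↑x1) ≠ 0 := by
    refine Finset.prod_ne_zero_iff.mpr fun x _ => Finset.prod_ne_zero_iff.mpr fun x1 _ =>
      Finset.prod_ne_zero_iff.mpr fun x2 _ => ?_
    exact neg_ne_zero.mpr (hv1 _ x.isLt _ (by have := x1.isLt; omega))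
  have hE2 : (∏ x : Fin n, ∏ x1 : Fin m, ∏ x2 : Fin l, v (cyc n ↑x) ↑x2) ≠ 0 := by
    refine Finset.prod_ne_zero_iff.mpr fun x _ => Finset.prod_ne_zero_iff.mpr fun x1 _ =>
      Finset.prod_ne_zero_iff.mpr fun x2 _ => ?_
    exact hv1 _ (hcyc _) _ (by have := x2.isLt; omega)
  set A1 := ∏ x : Fin n, ∏ x1 : Fin l, ∏ x2 : Fin l,
    if x1 = x2 then (1:ℂ) else q⁻¹ * v ↑x ↑x1 - q * v ↑x ↑x2 with hsA1
  set Q1 := ∏ x : Fin n, ∏ x1 : Fin l, ∏ x2 : Fin m, (q⁻¹ : ℂ) with hsQ1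
  set V1 := ∏ x : Fin n, ∏ x1 : Fin l, ∏ x2 : Fin m, v ↑x ↑x1 with hsV1
  set C2 := ∏ x : Fin n, ∏ x1 : Fin m, ∏ x2 : Fin l, -(q * v ↑x ↑x2) with hsC2
  set A2 := ∏ x : Fin n, ∏ x1 : Fin m, ∏ x2 : Fin m,
    if x1 = x2 then (1:ℂ) else q⁻¹ * v ↑x (↑x1 + l) - q * v ↑x (↑x2 + l) with hsA2
  set B1 := ∏ x : Fin n, ∏ x1 : Fin l, v ↑x ↑x1 with hsB1
  set B2 := ∏ x : Fin n, ∏ x1 : Fin m, v ↑x (↑x1 + l) with hsB2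
  set D1 := ∏ x : Fin n, ∏ x1 : Fin l, ∏ x2 : Fin l, (v (cyc n ↑x) ↑x2 - v ↑x ↑x1) with hsD1
  set E1 := ∏ x : Fin n, ∏ x1 : Fin l, ∏ x2 : Fin m, -v ↑x ↑x1 with hsE1
  set E2 := ∏ x : Fin n, ∏ x1 : Fin m, ∏ x2 : Fin l, v (cyc n ↑x) ↑x2 with hsE2
  set D2 := ∏ x : Fin n, ∏ x1 : Fin m, ∏ x2 : Fin m,
    (v (cyc n ↑x) (↑x2 + l) - v ↑x (↑x1 + l)) with hsD2
  rw [div_mul_div_comm, div_eq_div_iff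
    (mul_ne_zero (mul_ne_zero hD1 hE1) (mul_ne_zero hE2 hD2)) (mul_ne_zero hD1 hD2)]
  linear_combination (A1 * A2 * B1 * B2 * D1 * D2) * hT1

lemma DF0_ne (n : ℕ) (hn : 3 ≤ n) (l m : ℕ) (v : Va) (hv : v ∈ Dom n (fun _ => l + m)) :
    (∏ i : Fin n, ∏ j : Fin (l+m), ∏ j' : Fin (l+m), dfac n l v i.1 0 j.1 j'.1) ≠ 0 := by
  obtain ⟨hv1'', hv2''⟩ := hv
  have hv1 : ∀ i, i < n → ∀ j, j < l + m → v i j ≠ 0 := hv1''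
  have hv2 : ∀ i i' j j', i < n → i' < n → j < l + m → j' < l + m →
      (i, j) ≠ (i', j') → v i j ≠ v i' j' := hv2''

  have hcyc : ∀ i : ℕ, cyc n i < n := fun i => Nat.mod_lt _ (by omega)
  have hnecyc : ∀ i, i < n → cyc n i ≠ i := by
    intro i hi
    unfold cyc
    rcases Nat.lt_or_ge (i + 1) n with h | h
    · rw [Nat.mod_eq_of_lt h]; omega
    · have hieq : i + 1 = n := by omega
      rw [hieq, Nat.mod_self]; omega
  refine Finset.prod_ne_zero_iff.mpr fun i _ => Finset.prod_ne_zero_iff.mpr fun j _ =>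
    Finset.prod_ne_zero_iff.mpr fun j' _ => ?_
  unfold dfac
  have hsub : v (cyc n ↑i) ↑j' - v ↑i ↑j ≠ 0 :=
    sub_ne_zero_of_ne (hv2 _ _ _ _ (hcyc _) i.isLt (by have := j'.isLt; omega)
      (by have := j.isLt; omega) (fun h => hnecyc ↑i i.isLt (congrArg Prod.fst h)))
  by_cases h2 : (j:ℕ) < l <;> by_cases h3 : (j':ℕ) < l
  · rw [if_pos (Or.inl h3), if_pos (Or.inl h2), one_mul, one_mul]
    exact hsub
  · rw [if_neg (by omega), if_pos (Or.inl h2), zero_mul, one_mul, zero_sub]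
    exact neg_ne_zero.mpr (hv1 _ i.isLt _ (by have := j.isLt; omega))
  · rw [if_pos (Or.inl h3), if_neg (by omega), one_mul, zero_mul, sub_zero]
    exact hv1 _ (hcyc _) _ (by have := j'.isLt; omega)
  · rw [if_pos (Or.inr h2), if_pos (Or.inr h3), one_mul, one_mul]
    exact hsub

lemma contN (n : ℕ) (q : ℂ) (l K : ℕ) (v : Va) :
    Continuous fun t : ℂ => ∏ i : Fin n, ∏ j : Fin K, ∏ j' : Fin K,
      nfac q l v i.1 t j.1 j'.1 := by
  refine continuous_finset_prod _ fun i _ => continuous_finset_prod _ fun j _ =>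
    continuous_finset_prod _ fun j' _ => ?_
  unfold nfac
  split_ifs <;> fun_prop

lemma contD (n : ℕ) (l K : ℕ) (v : Va) :
    Continuous fun t : ℂ => ∏ i : Fin n, ∏ j : Fin K, ∏ j' : Fin K,
      dfac n l v i.1 t j.1 j'.1 := by
  refine continuous_finset_prod _ fun i _ => continuous_finset_prod _ fun j _ =>
    continuous_finset_prod _ fun j' _ => ?_
  unfold dfac
  split_ifs <;> fun_prop

end S12

theorem stmt12 (n : ℕ) (hn : 3 ≤ n) (q d : ℂ) (hq : q ≠ 0) (hd : d ≠ 0)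
    (hroot : NoRootsOfUnity q d) (k : ℕ) (hk : 1 ≤ k) (l : ℕ) (hl : l ≤ k) :
    ∀ v ∈ Dom n (fun _ => k),
      limInfty n (fun _ => l) (Fk n q k) v
        (Fk n q l v * Fk n q (k - l) (fun i j => v i (j + l))) := by
  intro v hv
  obtain ⟨m, rfl⟩ : ∃ m, k = l + m := ⟨k - l, by omega⟩
  have hml : l + m - l = m := by omega
  rw [hml]
  unfold limInfty
  set G : ℂ → ℂ := fun t =>
    ((∏ i : Fin n, ∏ j : Fin (l+m), ∏ j' : Fin (l+m), S12.nfac q l v i.1 t j.1 j'.1) *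
        ∏ i : Fin n, ∏ j : Fin (l+m), v i.1 j.1) /
      (∏ i : Fin n, ∏ j : Fin (l+m), ∏ j' : Fin (l+m), S12.dfac n l v i.1 t j.1 j'.1) with hG
  have hGcont : Filter.Tendsto G (𝓝 0) (𝓝 (G 0)) := by
    apply Filter.Tendsto.div
    · exact (((S12.contN n q l (l+m) v).mul continuous_const).tendsto 0)
    · exact ((S12.contD n l (l+m) v).tendsto 0)
    · exact S12.DF0_ne n hn l m v hv
  have h0 : G 0 = Fk n q l v * Fk n q m (fun i j => v i (j + l)) :=
    S12.value0 n hn q hq l m v hv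
  have hcomp : Filter.Tendsto (fun ξ : ℂ => G ξ⁻¹) (Bornology.cobounded ℂ)
      (𝓝 (Fk n q l v * Fk n q m (fun i j => v i (j + l)))) := by
    rw [← h0]
    exact hGcont.comp tendsto_inv₀_cobounded
  refine hcomp.congr' ?_
  filter_upwards [Bornology.eventually_ne_cobounded (0 : ℂ)] with ξ hξ
  exact (S12.fk_eq n (by omega) q l (l+m) v ξ hξ).symm
end
end

section
/- For any s̄ ∈ (ℂ×)^[n], any partition λ of k, any partition k̄ = (k_1 ≥ … ≥ k_r > 0) of k with k̄ > λ′ in the lexicographic order (λ′ the transpose of λ), and any μ̄ = (μ_1,…,μ_r) ∈ ℂ^r, the specialization φ_λ( F_{k_1}^{μ_1}(s̄) ⋆ ⋯ ⋆ F_{k_r}^{μ_r}(s̄) ) equals 0. -/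
open Filter Topology

noncomputable section

/-- the conjugate (transpose) partition: `(conjP l)_j = #{m ∈ l : m > j}` (0-indexed `j`) -/
def conjP (l : List ℕ) : List ℕ :=
  (List.range (l.foldr max 0)).map fun j => l.countP fun m => decide (j < m)

/-- locate the global (0-indexed) variable position `j` inside the groups of sizes given by
`lam`: returns `(t, j₀)` with `t` the group index and `j₀` the position within the group -/
def specIdx : List ℕ → ℕ → ℕ × ℕ
  | [], j => (0, j)
  | m :: rest, j =>
      if j < m then (0, j)
      else ((specIdx rest (j - m)).1 + 1, (specIdx rest (j - m)).2)

/-- the specialization `φ_λ`: `x_{i, λ_1 + ⋯ + λ_{t-1} + j} ↦ q^{2j} y_{i,t}`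
(`1 ≤ j ≤ λ_t`, i.e. `0`-indexed position `j-1` within the `t`-th group) -/
def specAssign (q : ℂ) (lam : List ℕ) (y : Va) : Va :=
  fun i j => q ^ (2 * ((specIdx lam j).2 + 1)) * y i (specIdx lam j).1

/-! ### Auxiliary combinatorial lemmas -/

lemma specIdx_cons_ge (L : ℕ) (rest : List ℕ) (p : ℕ) (h : L ≤ p) :
    specIdx (L :: rest) p = ((specIdx rest (p - L)).1 + 1, (specIdx rest (p - L)).2) := by
  simp [specIdx, Nat.not_lt.2 h]

lemma specIdx_cons_lt (L : ℕ) (rest : List ℕ) (p : ℕ) (h : p < L) :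
    specIdx (L :: rest) p = (0, p) := by
  simp [specIdx, h]

lemma specIdx_succ : ∀ (lam : List ℕ) (p : ℕ), p + 1 < lam.sum →
    (specIdx lam (p + 1)).1 = (specIdx lam p).1 →
    (specIdx lam (p + 1)).2 = (specIdx lam p).2 + 1 := by
  intro lam
  induction lam with
  | nil => intro p h; simp at h
  | cons L rest ih =>
    intro p hsum heq
    by_cases h1 : p + 1 < L
    · rw [specIdx_cons_lt L rest (p+1) h1, specIdx_cons_lt L rest p (by omega)]
    · by_cases h2 : p < L
      · exfalso
        rw [specIdx_cons_lt L rest p h2, specIdx_cons_ge L rest (p+1) (by omega)] at heq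
        simp at heq
      · rw [specIdx_cons_ge L rest (p+1) (by omega), specIdx_cons_ge L rest p (by omega)] at heq ⊢
        have h3 : p + 1 - L = (p - L) + 1 := by omega
        rw [h3] at heq ⊢
        simp only at heq ⊢
        exact ih (p - L) (by simp at hsum; omega) (by omega)

/-- counting bound from strict decrease along blocks -/
lemma blockCount : ∀ (lam : List ℕ) (a : ℕ → ℕ),
    (∀ p, p + 1 < lam.sum → (specIdx lam (p+1)).1 = (specIdx lam p).1 → a (p+1) < a p) →
    ∀ m, ((Finset.range lam.sum).filter fun p => a p < m).card ≤
      (lam.map fun L => min L m).sum := by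
  intro lam
  induction lam with
  | nil => intro a _ m; simp
  | cons L rest ih =>
    intro a ha m
    have hsum : (L :: rest).sum = L + rest.sum := by simp
    have hdec1 : ∀ p, p + 1 < L → a (p+1) < a p := by
      intro p hp
      apply ha p (by omega)
      rw [specIdx_cons_lt L rest (p+1) hp, specIdx_cons_lt L rest p (by omega)]
    have hdec : ∀ c p, p + c < L → c ≠ 0 → a (p + c) < a p := by
      intro c
      induction c with
      | zero => intro p _ h; omega
      | succ c ihc =>
        intro p h _
        have e : p + (c + 1) = (p + c) + 1 := by omega
        rw [e]
        have h1 : a (p + c + 1) < a (p + c) := hdec1 (p+c) (by omega)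
        rcases Nat.eq_zero_or_pos c with hc | hc
        · subst hc; simpa using h1
        · have := ihc p (by omega) (by omega)
          omega
    have hinj : Set.InjOn a ((Finset.range L).filter fun p => a p < m) := by
      intro x hx y hy hxy
      simp only [Finset.coe_filter, Set.mem_setOf_eq, Finset.mem_range] at hx hy
      by_contra hne
      rcases Nat.lt_or_ge x y with h | h
      · have := hdec (y - x) x (by omega) (by omega)
        rw [Nat.add_sub_cancel' (by omega)] at this; omega
      · have := hdec (x - y) y (by omega) (by omega)
        rw [Nat.add_sub_cancel' (by omega)] at this; omega
    have hcard1 : ((Finset.range L).filter fun p => a p < m).card ≤ min L m := by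
      refine le_min (le_trans (Finset.card_filter_le _ _) (by simp)) ?_
      calc ((Finset.range L).filter fun p => a p < m).card
          ≤ (Finset.range m).card := by
            refine Finset.card_le_card_of_injOn a ?_ hinj
            intro x hx
            simp only [Finset.coe_filter, Finset.coe_range, Set.mem_setOf_eq, Set.mem_Iio,
              Finset.mem_coe, Finset.mem_filter, Finset.mem_range] at hx ⊢
            exact hx.2
        _ = m := Finset.card_range m
    have hmapcard : (((Finset.range rest.sum).map (addLeftEmbedding L)).filter
        fun p => a p < m).card
        = ((Finset.range rest.sum).filter fun p => a (p + L) < m).card := by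
      rw [Finset.filter_map, Finset.card_map]
      congr 1
      ext p
      simp [addLeftEmbedding_apply, Nat.add_comm]
    have hsplit : ((Finset.range (L :: rest).sum).filter fun p => a p < m).card ≤
        ((Finset.range L).filter fun p => a p < m).card +
        ((Finset.range rest.sum).filter fun p => a (p + L) < m).card := by
      rw [hsum, Finset.range_add, Finset.filter_union]
      exact le_trans (Finset.card_union_le _ _) (by rw [hmapcard])
    have ha' : ∀ p, p + 1 < rest.sum → (specIdx rest (p+1)).1 = (specIdx rest p).1 →
        a (p + 1 + L) < a (p + L) := by
      intro p hp heq
      have h1 : (p + L) + 1 = (p + 1) + L := by omega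
      have := ha (p + L) (by omega)
      rw [h1, specIdx_cons_ge L rest ((p+1)+L) (by omega),
        specIdx_cons_ge L rest (p + L) (by omega)] at this
      simp only [Nat.add_sub_cancel] at this
      exact this (by simp [heq])
    have h2 := ih (fun p => a (p + L)) ha' m
    rw [hsum] at hsplit
    simp only [List.map_cons, List.sum_cons]
    omega
lemma list_range_map_sum (f : ℕ → ℕ) : ∀ n, ((List.range n).map f).sum = ∑ j ∈ Finset.range n, f j := by
  intro n
  induction n with
  | zero => simp
  | succ n ih => simp [List.range_succ, Finset.sum_range_succ, ih]

lemma sum_min_eq (lam : List ℕ) (m : ℕ) :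
    (lam.map fun L => min L m).sum = ∑ j ∈ Finset.range m, lam.countP fun L => decide (j < L) := by
  induction lam with
  | nil => simp
  | cons L rest ih =>
    simp only [List.map_cons, List.sum_cons, ih]
    have : ∀ j, (L :: rest).countP (fun L => decide (j < L)) =
        rest.countP (fun L => decide (j < L)) + if j < L then 1 else 0 := by
      intro j
      rw [List.countP_cons]
      simp
    simp only [this, Finset.sum_add_distrib]
    have h2 : (∑ j ∈ Finset.range m, if j < L then 1 else 0) = min L m := by
      rw [← Finset.card_filter]
      have : (Finset.range m).filter (fun j => j < L) = Finset.range (min L m) := by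
        ext j; simp; omega
      rw [this, Finset.card_range]
    omega

lemma le_foldr_max (lam : List ℕ) : ∀ L ∈ lam, L ≤ lam.foldr max 0 := by
  induction lam with
  | nil => simp
  | cons x xs ih =>
    intro L hL
    rcases List.mem_cons.1 hL with h | h
    · subst h; exact le_max_left _ _
    · exact le_trans (ih L h) (le_max_right _ _)

lemma conjP_take (lam : List ℕ) (m : ℕ) :
    ((conjP lam).take m).sum = ∑ j ∈ Finset.range m, lam.countP fun L => decide (j < L) := by
  set M := lam.foldr max 0 with hM
  have h1 : (conjP lam).take m = (List.range (min m M)).map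
      fun j => lam.countP fun L => decide (j < L) := by
    rw [conjP, ← List.map_take, List.take_range]
  rw [h1, list_range_map_sum]
  rcases le_or_gt m M with h | h
  · have : m ⊓ M = m := by omega
    rw [this]
  · have : m ⊓ M = M := by omega
    rw [this]
    apply Finset.sum_subset
    · exact Finset.range_subset_range.2 h.le
    · intro j hj2 hj
      simp only [Finset.mem_range, not_lt] at hj
      rw [List.countP_eq_zero]
      intro L hL
      simp only [decide_eq_true_eq]
      exact not_lt.2 (le_trans (le_foldr_max lam L hL) hj)

lemma conjP_sum (lam : List ℕ) : (conjP lam).sum = lam.sum := by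
  have hlen : (conjP lam).length = lam.foldr max 0 := by simp [conjP]
  have h1 : (conjP lam).sum = ((conjP lam).take (lam.foldr max 0)).sum := by
    rw [← hlen, List.take_length]
  rw [h1, conjP_take, ← sum_min_eq]
  congr 1
  conv_rhs => rw [← List.map_id lam]
  apply List.map_congr_left
  intro L hL
  simp [min_eq_left (le_foldr_max lam L hL)]

lemma lex_contra : ∀ (cp ks : List ℕ), List.Lex (· < ·) cp ks → (∀ m ∈ ks, 0 < m) →
    ks.sum ≤ cp.sum → (∀ m, (ks.take m).sum ≤ (cp.take m).sum) → False := by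
  intro cp ks h
  induction h with
  | @nil b l =>
    intro hpos hsum _
    simp only [List.sum_nil, List.sum_cons] at hsum
    have := hpos b (by simp)
    omega
  | @cons a l₁ l₂ h ih =>
    intro hpos hsum htake
    refine ih (fun m hm => hpos m (by simp [hm])) ?_ ?_
    · simp only [List.sum_cons] at hsum; omega
    · intro m
      have := htake (m + 1)
      simpa using this
  | @rel a l₁ b l₂ hab =>
    intro _ _ htake
    have := htake 1
    simp at this
    omega
lemma hyp_step (n : ℕ) (q : ℂ) (hq1 : (q^2)⁻¹ ≠ 1) (k₁ K2 : ℕ) (ks2 : List ℕ)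
    (v : Va) (σ : Fin n → Equiv.Perm (Fin (k₁ + K2)))
    (hv0 : ∀ i, i < n → ∀ j, j < k₁ + K2 → v i j ≠ 0)
    (hP : ∀ (i : Fin n) (j j' : Fin (k₁ + K2)), j.1 < k₁ → j ≠ j' →
        v i.1 ((σ i) j).1 ≠ (q^2)⁻¹ * v i.1 ((σ i) j').1)
    (hyp : ∀ a : ℕ → ℕ → ℕ,
        (∀ i, i < n → ∀ m, (((k₁ :: ks2)).take m).sum ≤
          ((Finset.range (k₁ + K2)).filter fun p => a i p < m).card) →
        ∃ i, i < n ∧ ∃ p p', p < k₁ + K2 ∧ p' < k₁ + K2 ∧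
          v i p = (q^2)⁻¹ * v i p' ∧ a i p ≤ a i p')
    (a' : ℕ → ℕ → ℕ)
    (ha' : ∀ i, i < n → ∀ m, (ks2.take m).sum ≤
          ((Finset.range K2).filter fun p => a' i p < m).card) :
    ∃ i, ∃ hi : i < n, ∃ p p', ∃ hp : p < K2, ∃ hp' : p' < K2,
      v i ((σ ⟨i, hi⟩) ⟨p + k₁, by omega⟩).1 =
        (q^2)⁻¹ * v i ((σ ⟨i, hi⟩) ⟨p' + k₁, by omega⟩).1 ∧ a' i p ≤ a' i p' := by
  classical
  set a : ℕ → ℕ → ℕ := fun i p => if h : i < n ∧ p < k₁ + K2 then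
      (if ((σ ⟨i, h.1⟩).symm ⟨p, h.2⟩ : Fin (k₁ + K2)).1 < k₁ then 0
       else a' i (((σ ⟨i, h.1⟩).symm ⟨p, h.2⟩ : Fin (k₁ + K2)).1 - k₁) + 1) else 0
    with ha_def
  have haval : ∀ (i : ℕ) (hi : i < n) (p : ℕ) (hp : p < k₁ + K2),
      a i p = if ((σ ⟨i, hi⟩).symm ⟨p, hp⟩ : Fin (k₁ + K2)).1 < k₁ then 0
        else a' i (((σ ⟨i, hi⟩).symm ⟨p, hp⟩ : Fin (k₁ + K2)).1 - k₁) + 1 := by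
    intro i hi p hp
    rw [ha_def]
    exact dif_pos (⟨hi, hp⟩ : i < n ∧ p < k₁ + K2)
  have hcounts : ∀ i, i < n → ∀ m, ((k₁ :: ks2).take m).sum ≤
      ((Finset.range (k₁ + K2)).filter fun p => a i p < m).card := by
    intro i hi m
    match m with
    | 0 => simp
    | (m+1) =>
      have h1 := ha' i hi m
      have hST : ((Finset.range (k₁ + K2)).filter
          (fun jj => jj < k₁ ∨ (k₁ ≤ jj ∧ a' i (jj - k₁) < m))).card ≤
          ((Finset.range (k₁ + K2)).filter fun p => a i p < m + 1).card := by
        apply Finset.card_le_card_of_injOn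
          (fun jj => if h : jj < k₁ + K2 then (((σ ⟨i, hi⟩) ⟨jj, h⟩ : Fin (k₁ + K2))).1 else jj)
        · intro jj hjj
          simp only [Finset.coe_filter, Finset.coe_range, Set.mem_setOf_eq, Set.mem_Iio,
            Finset.mem_coe, Finset.mem_filter, Finset.mem_range] at hjj
          obtain ⟨hjlt, hcase⟩ := hjj
          simp only [dif_pos hjlt, Finset.coe_filter, Finset.coe_range, Set.mem_setOf_eq,
            Set.mem_Iio, Finset.mem_coe, Finset.mem_filter, Finset.mem_range]
          refine ⟨((σ ⟨i, hi⟩) ⟨jj, hjlt⟩).isLt, ?_⟩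
          rw [haval i hi _ (((σ ⟨i, hi⟩) ⟨jj, hjlt⟩)).isLt]
          have e : ((σ ⟨i, hi⟩).symm ⟨(((σ ⟨i, hi⟩) ⟨jj, hjlt⟩)).1,
              (((σ ⟨i, hi⟩) ⟨jj, hjlt⟩)).isLt⟩ : Fin (k₁ + K2)) = ⟨jj, hjlt⟩ := by
            simp
          rw [e, show ((⟨jj, hjlt⟩ : Fin (k₁ + K2))).1 = jj from rfl]
          rcases hcase with h | ⟨h1', h2'⟩
          · rw [if_pos h]; omega
          · rw [if_neg (by omega)]; omega
        · intro x hx y hy hxy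
          simp only [Finset.coe_filter, Set.mem_setOf_eq, Finset.mem_range] at hx hy
          simp only [dif_pos hx.1, dif_pos hy.1] at hxy
          have h2 := (σ ⟨i, hi⟩).injective (Fin.ext hxy)
          exact congrArg Fin.val h2
      have hlower : k₁ + ((Finset.range K2).filter fun p => a' i p < m).card ≤
          ((Finset.range (k₁ + K2)).filter
          (fun jj => jj < k₁ ∨ (k₁ ≤ jj ∧ a' i (jj - k₁) < m))).card := by
        have hsub : Finset.range k₁ ∪ ((Finset.range K2).filter fun p => a' i p < m).map
            (addLeftEmbedding k₁) ⊆ (Finset.range (k₁ + K2)).filter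
            (fun jj => jj < k₁ ∨ (k₁ ≤ jj ∧ a' i (jj - k₁) < m)) := by
          intro x hx
          simp only [Finset.mem_union, Finset.mem_map, addLeftEmbedding_apply,
            Finset.mem_filter, Finset.mem_range] at hx
          simp only [Finset.mem_filter, Finset.mem_range]
          rcases hx with h | ⟨yy, ⟨hy1, hy2⟩, rfl⟩
          · exact ⟨by omega, Or.inl h⟩
          · refine ⟨by omega, Or.inr ⟨by omega, ?_⟩⟩
            have e : k₁ + yy - k₁ = yy := by omega
            rw [e]; exact hy2
        have hdisj : Disjoint (Finset.range k₁)
            (((Finset.range K2).filter fun p => a' i p < m).map (addLeftEmbedding k₁)) := by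
          rw [Finset.disjoint_left]
          intro x hx hx2
          simp only [Finset.mem_range] at hx
          simp only [Finset.mem_map, addLeftEmbedding_apply] at hx2
          obtain ⟨yy, _, rfl⟩ := hx2
          omega
        calc k₁ + ((Finset.range K2).filter fun p => a' i p < m).card
            = (Finset.range k₁ ∪ ((Finset.range K2).filter fun p => a' i p < m).map
              (addLeftEmbedding k₁)).card := by
              rw [Finset.card_union_of_disjoint hdisj, Finset.card_range, Finset.card_map]
          _ ≤ _ := Finset.card_le_card hsub
      have htake : ((k₁ :: ks2).take (m+1)).sum = k₁ + (ks2.take m).sum := by simp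
      rw [htake]
      omega
  obtain ⟨i, hi, p, p', hp, hp', hrel, hle⟩ := hyp a hcounts
  have hq0 : v i p ≠ 0 := hv0 i hi p hp
  have hpp' : p ≠ p' := by
    intro h
    subst h
    have h2 : (q^2)⁻¹ * v i p = 1 * v i p := by rw [one_mul]; exact hrel.symm
    exact hq1 (mul_right_cancel₀ hq0 h2)
  have hσjf : ((σ ⟨i, hi⟩) ((σ ⟨i, hi⟩).symm ⟨p, hp⟩)).1 = p := by simp
  have hσjf' : ((σ ⟨i, hi⟩) ((σ ⟨i, hi⟩).symm ⟨p', hp'⟩)).1 = p' := by simp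
  have hjne : (σ ⟨i, hi⟩).symm ⟨p, hp⟩ ≠ (σ ⟨i, hi⟩).symm ⟨p', hp'⟩ := by
    intro h
    apply hpp'
    have h2 := congrArg (fun t => ((σ ⟨i, hi⟩) t).1) h
    simpa [hσjf, hσjf'] using h2
  have hjk : ¬ ((σ ⟨i, hi⟩).symm ⟨p, hp⟩ : Fin (k₁ + K2)).1 < k₁ := by
    intro hlt
    exact hP ⟨i, hi⟩ _ _ hlt hjne (by rw [hσjf, hσjf']; exact hrel)
  have havp : a i p = a' i (((σ ⟨i, hi⟩).symm ⟨p, hp⟩ : Fin (k₁ + K2)).1 - k₁) + 1 := by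
    rw [haval i hi p hp, if_neg hjk]
  have hjk' : ¬ ((σ ⟨i, hi⟩).symm ⟨p', hp'⟩ : Fin (k₁ + K2)).1 < k₁ := by
    intro hlt
    rw [havp, haval i hi p' hp', if_pos hlt] at hle
    omega
  have havp' : a i p' = a' i (((σ ⟨i, hi⟩).symm ⟨p', hp'⟩ : Fin (k₁ + K2)).1 - k₁) + 1 := by
    rw [haval i hi p' hp', if_neg hjk']
  have hjlt := ((σ ⟨i, hi⟩).symm ⟨p, hp⟩ : Fin (k₁ + K2)).isLt
  have hjlt' := ((σ ⟨i, hi⟩).symm ⟨p', hp'⟩ : Fin (k₁ + K2)).isLt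
  refine ⟨i, hi, ((σ ⟨i, hi⟩).symm ⟨p, hp⟩ : Fin (k₁ + K2)).1 - k₁,
    ((σ ⟨i, hi⟩).symm ⟨p', hp'⟩ : Fin (k₁ + K2)).1 - k₁, by omega, by omega, ?_, ?_⟩
  · have e1 : (⟨((σ ⟨i, hi⟩).symm ⟨p, hp⟩ : Fin (k₁ + K2)).1 - k₁ + k₁, by omega⟩ :
        Fin (k₁ + K2)) = (σ ⟨i, hi⟩).symm ⟨p, hp⟩ := Fin.ext (by simp; omega)
    have e2 : (⟨((σ ⟨i, hi⟩).symm ⟨p', hp'⟩ : Fin (k₁ + K2)).1 - k₁ + k₁, by omega⟩ :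
        Fin (k₁ + K2)) = (σ ⟨i, hi⟩).symm ⟨p', hp'⟩ := Fin.ext (by simp; omega)
    rw [e1, e2, hσjf, hσjf']
    exact hrel
  · rw [havp, havp'] at hle
    omega
lemma FkmuList_fst (n : ℕ) (q d : ℂ) (s : ℕ → ℂ) :
    ∀ l : List (ℕ × ℂ), (FkmuList n q d s l).1 = (l.map Prod.fst).sum := by
  intro l
  induction l with
  | nil => rfl
  | cons hd tl ih => simp [FkmuList, ih]

lemma Fkmu_eq_zero (n : ℕ) (q : ℂ) (s : ℕ → ℂ) (m : ℕ) (μ : ℂ) (w : Va)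
    (i : Fin n) (j j' : Fin m) (hne : j ≠ j')
    (h : w i.1 j.1 = (q^2)⁻¹ * w i.1 j'.1) : Fkmu n q s m μ w = 0 := by
  have hz : (∏ i : Fin n, ∏ j : Fin m, ∏ j' : Fin m,
      if j = j' then 1 else w i.1 j.1 - (q^2)⁻¹ * w i.1 j'.1) = 0 := by
    refine Finset.prod_eq_zero (Finset.mem_univ i) ?_
    refine Finset.prod_eq_zero (Finset.mem_univ j) ?_
    refine Finset.prod_eq_zero (Finset.mem_univ j') ?_
    rw [if_neg hne, h]
    ring
  simp only [Fkmu, hz, zero_mul, zero_div]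

lemma omg_zero (n : ℕ) (q d : ℂ) (i : ℕ) (x y : ℂ) (hy : y ≠ 0)
    (h : x = (q^2)⁻¹ * y) : omg n q d i i (x / y) = 0 := by
  rw [h, mul_div_assoc, div_self hy, mul_one]
  simp [omg]

lemma key (n : ℕ) (q d : ℂ) (s : ℕ → ℂ) (hq1 : (q^2)⁻¹ ≠ 1) (l : List (ℕ × ℂ)) :
    ∀ v : Va, v ∈ Dom n (fun _ => (l.map Prod.fst).sum) →
    (∀ a : ℕ → ℕ → ℕ,
        (∀ i, i < n → ∀ m, (((l.map Prod.fst).take m).sum ≤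
          ((Finset.range (l.map Prod.fst).sum).filter fun p => a i p < m).card)) →
        ∃ i, i < n ∧ ∃ p p', p < (l.map Prod.fst).sum ∧ p' < (l.map Prod.fst).sum ∧
          v i p = (q^2)⁻¹ * v i p' ∧ a i p ≤ a i p') →
    (FkmuList n q d s l).2 v = 0 := by
  induction l with
  | nil =>
    intro v hv hyp
    obtain ⟨i, hi, p, p', hp, -⟩ := hyp (fun _ _ => 0) (by intro i hi m; simp)
    simp at hp
  | cons km rest ih =>
    intro v hv hyp
    obtain ⟨k₁, μ⟩ := km
    have hdeg : (FkmuList n q d s rest).1 = (rest.map Prod.fst).sum :=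
      FkmuList_fst n q d s rest
    show starD n q d (fun _ => k₁) (fun _ => (FkmuList n q d s rest).1)
        (Fkmu n q s k₁ μ) (FkmuList n q d s rest).2 v = 0
    rw [hdeg]
    simp only [starD]
    apply Finset.sum_eq_zero
    intro σ _
    have hS : (List.map Prod.fst ((k₁, μ) :: rest)).sum = k₁ + (List.map Prod.fst rest).sum := by simp
    obtain ⟨hv0', hvd'⟩ := hv
    have hv0 : ∀ i, i < n → ∀ j, j < k₁ + (List.map Prod.fst rest).sum → v i j ≠ 0 := by
      intro i hi j hj
      exact hv0' i hi j hj
    have hvd : ∀ i i' j j', i < n → i' < n → j < k₁ + (List.map Prod.fst rest).sum → j' < k₁ + (List.map Prod.fst rest).sum →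
        (i, j) ≠ (i', j') → v i j ≠ v i' j' := by
      intro i i' j j' hi hi' hj hj' hne
      exact hvd' i i' j j' hi hi' hj hj' hne
    have wval : ∀ (i : Fin n) (j : Fin (k₁ + (List.map Prod.fst rest).sum)),
        permAssign n (fun _ => k₁ + (List.map Prod.fst rest).sum) σ v i.1 j.1 = v i.1 (σ i j).1 := by
      intro i j
      simp only [permAssign, dif_pos i.isLt, dif_pos j.isLt]
    by_cases hP : ∃ (i : Fin n) (j j' : Fin (k₁ + (List.map Prod.fst rest).sum)), j.1 < k₁ ∧ j ≠ j' ∧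
        v i.1 (σ i j).1 = (q^2)⁻¹ * v i.1 (σ i j').1
    · obtain ⟨i, j, j', hjk, hne, hrel⟩ := hP
      by_cases hj' : j'.1 < k₁
      · -- the Fkmu factor vanishes
        have h0 : Fkmu n q s k₁ μ (permAssign n (fun _ => k₁ + (List.map Prod.fst rest).sum) σ v) = 0 := by
          refine Fkmu_eq_zero n q s k₁ μ _ i ⟨j.1, hjk⟩ ⟨j'.1, hj'⟩
            (by simp only [ne_eq, Fin.mk.injEq]; exact fun h => hne (Fin.ext h)) ?_
          show permAssign n (fun _ => k₁ + (List.map Prod.fst rest).sum) σ v i.1 j.1 =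
            (q^2)⁻¹ * permAssign n (fun _ => k₁ + (List.map Prod.fst rest).sum) σ v i.1 j'.1
          rw [wval i j, wval i j']
          exact hrel
        rw [h0, zero_mul, zero_mul]
      · -- the omg factor vanishes
        have hj'2 : k₁ ≤ j'.1 := Nat.not_lt.1 hj'
        refine mul_eq_zero_of_right _ ?_
        refine Finset.prod_eq_zero (Finset.mem_univ i) ?_
        refine Finset.prod_eq_zero (Finset.mem_univ i) ?_
        refine Finset.prod_eq_zero (Finset.mem_univ (⟨j.1, hjk⟩ : Fin k₁)) ?_
        refine Finset.prod_eq_zero (Finset.mem_univ (⟨j'.1 - k₁, by omega⟩ : Fin (List.map Prod.fst rest).sum)) ?_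
        have e : k₁ + (j'.1 - k₁) = j'.1 := by omega
        show omg n q d i.1 i.1 (permAssign n (fun _ => k₁ + (List.map Prod.fst rest).sum) σ v i.1 j.1 /
          permAssign n (fun _ => k₁ + (List.map Prod.fst rest).sum) σ v i.1 (k₁ + (j'.1 - k₁))) = 0
        rw [e, wval i j, wval i j']
        exact omg_zero n q d i.1 _ _ (hv0 i.1 i.isLt _ (σ i j').isLt) hrel
    · -- the inner product vanishes
      push_neg at hP
      have hDom' : (fun i j => permAssign n (fun _ => k₁ + (List.map Prod.fst rest).sum) σ v i (j + k₁)) ∈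
          Dom n (fun _ => (List.map Prod.fst rest).sum) := by
        constructor
        · intro i hi j hj
          have hj2 : j < (List.map Prod.fst rest).sum := hj
          show permAssign n (fun _ => k₁ + (List.map Prod.fst rest).sum) σ v i (j + k₁) ≠ 0
          have e2 : permAssign n (fun _ => k₁ + (List.map Prod.fst rest).sum) σ v i (j + k₁) =
              v i ((σ ⟨i, hi⟩) ⟨j + k₁, by omega⟩).1 := wval ⟨i, hi⟩ ⟨j + k₁, by omega⟩
          rw [e2]
          exact hv0 i hi _ (Fin.isLt _)
        · intro i i' j j' hi hi' hj hj' hne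
          have hj2 : j < (List.map Prod.fst rest).sum := hj
          have hj'2 : j' < (List.map Prod.fst rest).sum := hj'
          show permAssign n (fun _ => k₁ + (List.map Prod.fst rest).sum) σ v i (j + k₁) ≠ permAssign n (fun _ => k₁ + (List.map Prod.fst rest).sum) σ v i' (j' + k₁)
          have e2 : permAssign n (fun _ => k₁ + (List.map Prod.fst rest).sum) σ v i (j + k₁) =
              v i ((σ ⟨i, hi⟩) ⟨j + k₁, by omega⟩).1 := wval ⟨i, hi⟩ ⟨j + k₁, by omega⟩
          have e3 : permAssign n (fun _ => k₁ + (List.map Prod.fst rest).sum) σ v i' (j' + k₁) =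
              v i' ((σ ⟨i', hi'⟩) ⟨j' + k₁, by omega⟩).1 := wval ⟨i', hi'⟩ ⟨j' + k₁, by omega⟩
          rw [e2, e3]
          apply hvd i i' _ _ hi hi' (Fin.isLt _) (Fin.isLt _)
          intro hcon
          apply hne
          simp only [Prod.mk.injEq] at hcon ⊢
          obtain ⟨h1, h2⟩ := hcon
          subst h1
          refine ⟨rfl, ?_⟩
          have h3 := (σ ⟨i, hi⟩).injective (Fin.ext h2)
          have h4 : j + k₁ = j' + k₁ := congrArg Fin.val h3
          omega
      have h0 : (FkmuList n q d s rest).2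
          (fun i j => permAssign n (fun _ => k₁ + (List.map Prod.fst rest).sum) σ v i (j + k₁)) = 0 := by
        apply ih _ hDom'
        intro a' ha'
        obtain ⟨i, hi, p, p', hp, hp', hrel, hle⟩ :=
          hyp_step n q hq1 k₁ (List.map Prod.fst rest).sum (List.map Prod.fst rest) v σ hv0 hP hyp a' ha'
        refine ⟨i, hi, p, p', hp, hp', ?_, hle⟩
        show permAssign n (fun _ => k₁ + (List.map Prod.fst rest).sum) σ v i (p + k₁) = (q^2)⁻¹ * permAssign n (fun _ => k₁ + (List.map Prod.fst rest).sum) σ v i (p' + k₁)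
        have e2 : permAssign n (fun _ => k₁ + (List.map Prod.fst rest).sum) σ v i (p + k₁) =
            v i ((σ ⟨i, hi⟩) ⟨p + k₁, by omega⟩).1 := wval ⟨i, hi⟩ ⟨p + k₁, by omega⟩
        have e3 : permAssign n (fun _ => k₁ + (List.map Prod.fst rest).sum) σ v i (p' + k₁) =
            v i ((σ ⟨i, hi⟩) ⟨p' + k₁, by omega⟩).1 := wval ⟨i, hi⟩ ⟨p' + k₁, by omega⟩
        rw [e2, e3]
        exact hrel
      rw [h0, mul_zero, zero_mul]

theorem stmt19 (n : ℕ) (hn : 3 ≤ n) (q d : ℂ) (hq : q ≠ 0) (hd : d ≠ 0)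
    (hroot : NoRootsOfUnity q d) (s : ℕ → ℂ) (hs : ∀ i, i < n → s i ≠ 0)
    (k : ℕ) (hk : 1 ≤ k)
    (lam : List ℕ) (hlam_sorted : lam.Pairwise (· ≥ ·)) (hlam_pos : ∀ m ∈ lam, 0 < m)
    (hlam_sum : lam.sum = k)
    (ks : List ℕ) (hks_sorted : ks.Pairwise (· ≥ ·)) (hks_pos : ∀ m ∈ ks, 0 < m)
    (hks_sum : ks.sum = k)
    (hlex : List.Lex (· < ·) (conjP lam) ks)
    (μs : List ℂ) (hlen : μs.length = ks.length) :
    ∀ y : Va, specAssign q lam y ∈ Dom n (fun _ => k) →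
      (FkmuList n q d s (ks.zip μs)).2 (specAssign q lam y) = 0 := by
  intro y hy
  have hn0 : 0 < n := by omega
  have hq2 : (q ^ 2)⁻¹ ≠ 1 := by
    intro h
    exact (hroot 2 (by omega)).1 (by rwa [inv_eq_one] at h)
  have hmap : (ks.zip μs).map Prod.fst = ks := List.map_fst_zip (by omega)
  have hsum : ((ks.zip μs).map Prod.fst).sum = k := by rw [hmap, hks_sum]
  apply key n q d s hq2 (ks.zip μs) (specAssign q lam y)
  · have he : Dom n (fun _ => ((ks.zip μs).map Prod.fst).sum) = Dom n (fun _ => k) := by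
      rw [hsum]
    rw [he]
    exact hy
  · intro a ha
    rw [hmap] at ha
    rw [hks_sum] at ha
    rw [hsum]
    by_contra hcon
    push_neg at hcon
    have hdec : ∀ p, p + 1 < lam.sum → (specIdx lam (p+1)).1 = (specIdx lam p).1 →
        a 0 (p+1) < a 0 p := by
      intro p hp heq
      have h2 := specIdx_succ lam p hp heq
      have hrel : specAssign q lam y 0 p = (q ^ 2)⁻¹ * specAssign q lam y 0 (p+1) := by
        simp only [specAssign, heq, h2]
        have hq2ne : (q : ℂ) ^ 2 ≠ 0 := pow_ne_zero _ hq
        rw [show 2 * ((specIdx lam p).2 + 1 + 1) = 2 * ((specIdx lam p).2 + 1) + 2 by ring,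
          pow_add]
        field_simp
      have := hcon 0 hn0 p (p+1) (by omega) (by omega) hrel
      omega
    have hbc := blockCount lam (a 0) hdec
    rw [hlam_sum] at hbc
    refine lex_contra (conjP lam) ks hlex hks_pos
      (by rw [conjP_sum, hlam_sum, hks_sum]) ?_
    intro m
    calc (ks.take m).sum ≤ ((Finset.range k).filter fun p => a 0 p < m).card := ha 0 hn0 m
      _ ≤ (lam.map fun L => min L m).sum := hbc m
      _ = ((conjP lam).take m).sum := by rw [sum_min_eq, conjP_take]
end
end
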